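/- arXiv:2102.03869 — 13 statements merged into one kernel-verified Lean document; each statement's English description precedes it below -/
import Mathlib

section
/- Let A be a symmetric positive definite n×n matrix and h: ℝⁿ → ℝ a proper function. Then the weighted proximal operator satisfies prox_{αh}^A(x) = A^{-1/2} · prox_{αh∘A^{-1/2}}(A^{1/2} x), where prox_{αh}^A(x) = argmin_z (1/2)⟨z−x, A(z−x)⟩ + αh(z) and prox_{αh}(x) = argmin_z (1/2)‖z−x‖² + αh(z). -/
/-!
Write `S = A^{1/2}`, which is symmetric and invertible with `S * S = A`. Then
`⟨w - x, A (w - x)⟩ = ‖S w - S x‖²`, so the objective defining `q`, evaluated at `z`, is the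
weighted objective defining `p`, evaluated at `S⁻¹ z`. As `z ↦ S⁻¹ z` is a bijection, `S⁻¹ q` is
a strict global minimizer of the weighted objective, and strict global minimizers are unique.
-/

open Matrix

namespace Matrix.PosSemidef

section

open scoped ComplexOrder

/-- The positive semidefinite square root of a positive semidefinite matrix
(definition from Mathlib of December 2024, removed since). -/
noncomputable def sqrt {n 𝕜 : Type*} [Fintype n] [RCLike 𝕜] [DecidableEq n]
    {A : Matrix n n 𝕜} (hA : PosSemidef A) : Matrix n n 𝕜 :=
  hA.1.eigenvectorUnitary.1 * diagonal ((↑) ∘ (√·) ∘ hA.1.eigenvalues) *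
  (star hA.1.eigenvectorUnitary : Matrix n n 𝕜)

variable {n 𝕜 : Type*} [Fintype n] [RCLike 𝕜] [DecidableEq n] {A : Matrix n n 𝕜}

theorem sqrt_mul_self (hA : PosSemidef A) : hA.sqrt * hA.sqrt = A := by
  set U : Matrix n n 𝕜 := (hA.1.eigenvectorUnitary : Matrix n n 𝕜)
  set D : Matrix n n 𝕜 := diagonal ((↑) ∘ (√·) ∘ hA.1.eigenvalues)
  have hD : D * D = diagonal (RCLike.ofReal ∘ hA.1.eigenvalues) := by
    rw [diagonal_mul_diagonal]
    congr 1
    funext i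
    simp [← RCLike.ofReal_mul, Real.mul_self_sqrt (hA.eigenvalues_nonneg i)]
  conv_rhs => rw [hA.1.spectral_theorem, Unitary.conjStarAlgAut_apply]
  calc hA.sqrt * hA.sqrt = U * (D * (star U * U) * D) * star U := by
        simp only [sqrt, U, D, Matrix.mul_assoc]
    _ = _ := by rw [Unitary.star_mul_self_of_mem hA.1.eigenvectorUnitary.2, Matrix.mul_one, hD]

theorem sqrt_conjTranspose (hA : PosSemidef A) : hA.sqrtᴴ = hA.sqrt := by
  have hD : star (RCLike.ofReal ∘ (√·) ∘ hA.1.eigenvalues : n → 𝕜) =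
      RCLike.ofReal ∘ (√·) ∘ hA.1.eigenvalues := by
    funext i
    simp
  simp [sqrt, hD, Matrix.star_eq_conjTranspose, Matrix.mul_assoc]

theorem _root_.Matrix.PosDef.isUnit_sqrt (hA : A.PosDef) : IsUnit hA.posSemidef.sqrt :=
  isUnit_of_mul_isUnit_left (hA.posSemidef.sqrt_mul_self ▸ hA.isUnit)

end

theorem sqrt_transpose {n : Type*} [Fintype n] [DecidableEq n] {A : Matrix n n ℝ}
    (hA : PosSemidef A) : hA.sqrtᵀ = hA.sqrt :=
  hA.sqrt_conjTranspose

end Matrix.PosSemidef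

theorem Matrix.dotProduct_transpose_mul_mulVec {m n R : Type*} [Fintype m] [Fintype n]
    [CommSemiring R] (S : Matrix m n R) (v w : n → R) :
    v ⬝ᵥ ((Sᵀ * S) *ᵥ w) = (S *ᵥ v) ⬝ᵥ (S *ᵥ w) := by
  rw [← mulVec_mulVec, dotProduct_mulVec, vecMul_transpose]

def IsStrictMinimizer {α β : Type*} [Preorder β] (F : α → β) (p : α) : Prop :=
  ∀ z, z ≠ p → F p < F z

namespace IsStrictMinimizer

variable {α β γ : Type*} [Preorder β] {F : α → β}

theorem unique {p p' : α} (hp : IsStrictMinimizer F p) (hp' : IsStrictMinimizer F p') :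
    p = p' := by
  by_contra hne
  exact lt_asymm (hp p' (Ne.symm hne)) (hp' p hne)

theorem of_comp {g : γ → α} (hg : Function.Surjective g) {q : γ}
    (hq : IsStrictMinimizer (F ∘ g) q) : IsStrictMinimizer F (g q) := by
  intro w hw
  obtain ⟨z, rfl⟩ := hg w
  exact hq z (fun hzq => hw (congrArg g hzq))

end IsStrictMinimizer

theorem stmt_0_general (n : ℕ) (A : Matrix (Fin n) (Fin n) ℝ) (hA : A.PosDef)
    (h : (Fin n → ℝ) → ℝ) (α : ℝ) (x p q : Fin n → ℝ)
    -- `p` is the unique minimizer of `z ↦ (1/2)⟨z−x, A(z−x)⟩ + αh(z)`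
    (hp : ∀ z, z ≠ p →
      (1/2) * ((p - x) ⬝ᵥ (A *ᵥ (p - x))) + α * h p <
      (1/2) * ((z - x) ⬝ᵥ (A *ᵥ (z - x))) + α * h z)
    -- `q` is the unique minimizer of `z ↦ (1/2)‖z − A^{1/2}x‖² + αh(A^{-1/2}z)`
    (hq : ∀ z, z ≠ q →
      (1/2) * ((q - hA.posSemidef.sqrt *ᵥ x) ⬝ᵥ (q - hA.posSemidef.sqrt *ᵥ x)) +
        α * h ((hA.posSemidef.sqrt)⁻¹ *ᵥ q) <
      (1/2) * ((z - hA.posSemidef.sqrt *ᵥ x) ⬝ᵥ (z - hA.posSemidef.sqrt *ᵥ x)) +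
        α * h ((hA.posSemidef.sqrt)⁻¹ *ᵥ z)) :
    p = (hA.posSemidef.sqrt)⁻¹ *ᵥ q := by
  set S := hA.posSemidef.sqrt
  set F : (Fin n → ℝ) → ℝ := fun w ↦ (1/2) * ((w - x) ⬝ᵥ (A *ᵥ (w - x))) + α * h w
  have hS : S * S⁻¹ = 1 := mul_nonsing_inv S ((isUnit_iff_isUnit_det S).1 hA.isUnit_sqrt)
  have hquad (w : Fin n → ℝ) :
      (w - x) ⬝ᵥ (A *ᵥ (w - x)) = (S *ᵥ w - S *ᵥ x) ⬝ᵥ (S *ᵥ w - S *ᵥ x) := by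
    rw [← mulVec_sub, ← dotProduct_transpose_mul_mulVec, hA.posSemidef.sqrt_transpose,
      hA.posSemidef.sqrt_mul_self]
  have hqF : IsStrictMinimizer (F ∘ (S⁻¹ *ᵥ ·)) q := by
    simpa only [IsStrictMinimizer, Function.comp_apply, F, hquad, mulVec_mulVec, hS, one_mulVec]
      using hq
  have hsurj : Function.Surjective (S⁻¹ *ᵥ ·) :=
    mulVec_surjective_iff_isUnit.2 (isUnit_nonsing_inv_iff.2 hA.isUnit_sqrt)
  exact IsStrictMinimizer.unique (F := F) hp (hqF.of_comp hsurj)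

/-- The weighted proximal operator of a proper function `h` with respect to a symmetric
positive definite matrix `A` satisfies
`prox_{αh}^A(x) = A^{-1/2} · prox_{αh∘A^{-1/2}}(A^{1/2} x)`,
where each proximal point is assumed to exist and be the unique minimizer. -/
theorem stmt_0 (n : ℕ) (A : Matrix (Fin n) (Fin n) ℝ) (hA : A.PosDef)
    (h : (Fin n → ℝ) → ℝ) (α : ℝ) (hα : 0 < α) (x p q : Fin n → ℝ)
    -- `p` is the unique minimizer of `z ↦ (1/2)⟨z−x, A(z−x)⟩ + αh(z)`
    (hp : ∀ z, z ≠ p →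
      (1/2) * ((p - x) ⬝ᵥ (A *ᵥ (p - x))) + α * h p <
      (1/2) * ((z - x) ⬝ᵥ (A *ᵥ (z - x))) + α * h z)
    -- `q` is the unique minimizer of `z ↦ (1/2)‖z − A^{1/2}x‖² + αh(A^{-1/2}z)`
    (hq : ∀ z, z ≠ q →
      (1/2) * ((q - hA.posSemidef.sqrt *ᵥ x) ⬝ᵥ (q - hA.posSemidef.sqrt *ᵥ x)) +
        α * h ((hA.posSemidef.sqrt)⁻¹ *ᵥ q) <
      (1/2) * ((z - hA.posSemidef.sqrt *ᵥ x) ⬝ᵥ (z - hA.posSemidef.sqrt *ᵥ x)) +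
        α * h ((hA.posSemidef.sqrt)⁻¹ *ᵥ z)) :
    p = (hA.posSemidef.sqrt)⁻¹ *ᵥ q :=
  stmt_0_general n A hA h α x p q hp hq
end

section
/- Let D = diag(d₁,…,dₙ) with all dᵢ > 0, α, λ > 0, and h(x) = λ‖x‖₂. The point 0 is a global minimizer of F(z) = (1/2)‖z−x‖₂² + αλ‖Dz‖₂ if and only if ‖D⁻¹x‖₂ ≤ αλ. -/
/-!
Expanding the square, `0` minimizes `F` iff `⟪z, x⟫ ≤ ½‖z‖² + αλ‖Dz‖` for every `z`.
Since `⟪z, x⟫ = ⟪Dz, D⁻¹x⟫`, Cauchy–Schwarz gives this as soon as `‖D⁻¹x‖ ≤ αλ`.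
Conversely, along the ray `z = t D⁻²x` (where `Dz = t D⁻¹x` and Cauchy–Schwarz is an
equality) the inequality reads `t‖D⁻¹x‖² ≤ O(t²) + αλ t‖D⁻¹x‖`; dividing by `t` and
letting `t → 0⁺` yields `‖D⁻¹x‖ ≤ αλ`.
-/

open Filter Topology

lemma le_of_forall_pos_le_mul_add {a b c : ℝ} (h : ∀ t > 0, a ≤ t * b + c) : a ≤ c := by
  have hlim : Tendsto (fun t : ℝ => t * b + c) (𝓝[>] 0) (𝓝 c) := by
    have hcont : Continuous fun t : ℝ => t * b + c := by fun_prop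
    simpa using (hcont.tendsto 0).mono_left nhdsWithin_le_nhds
  exact ge_of_tendsto hlim (eventually_nhdsWithin_of_forall h)

section WeightedNorm

variable {ι : Type*} [Fintype ι]

lemma forall_half_sum_sq_le_iff (x : ι → ℝ) (g : (ι → ℝ) → ℝ) :
    (∀ z : ι → ℝ, (1/2) * (∑ i, (x i)^2) ≤ (1/2) * (∑ i, (z i - x i)^2) + g z) ↔
      ∀ z : ι → ℝ, ∑ i, z i * x i ≤ (1/2) * (∑ i, (z i)^2) + g z := by
  refine forall_congr' fun z => ?_
  have expand : ∑ i, (z i - x i)^2 = ∑ i, (z i)^2 - 2 * ∑ i, z i * x i + ∑ i, (x i)^2 := by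
    simp only [Finset.mul_sum, ← Finset.sum_sub_distrib, ← Finset.sum_add_distrib]
    exact Finset.sum_congr rfl fun i _ => by ring
  rw [expand]
  constructor <;> intro h <;> linarith

lemma sum_mul_le_of_sqrt_sum_div_sq_le {d x : ι → ℝ} (hd : ∀ i, d i ≠ 0) (z : ι → ℝ)
    {c : ℝ} (hc : Real.sqrt (∑ i, (x i / d i)^2) ≤ c) :
    ∑ i, z i * x i ≤ c * Real.sqrt (∑ i, (d i * z i)^2) :=
  calc ∑ i, z i * x i = ∑ i, (d i * z i) * (x i / d i) :=
        Finset.sum_congr rfl fun i _ => by field_simp [hd i]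
    _ ≤ Real.sqrt (∑ i, (d i * z i)^2) * Real.sqrt (∑ i, (x i / d i)^2) :=
        Real.sum_mul_le_sqrt_mul_sqrt _ _ _
    _ ≤ Real.sqrt (∑ i, (d i * z i)^2) * c := by gcongr
    _ = c * Real.sqrt (∑ i, (d i * z i)^2) := mul_comm _ _

lemma sqrt_sum_div_sq_le_of_forall_sum_mul_le {d x : ι → ℝ} (hd : ∀ i, d i ≠ 0) {c : ℝ}
    (hc : 0 ≤ c) (h : ∀ z : ι → ℝ,
      ∑ i, z i * x i ≤ (1/2) * (∑ i, (z i)^2) + c * Real.sqrt (∑ i, (d i * z i)^2)) :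
    Real.sqrt (∑ i, (x i / d i)^2) ≤ c := by
  set S := ∑ i, (x i / d i)^2
  set Q := ∑ i, (x i / (d i)^2)^2
  have along_ray : ∀ t > 0, S ≤ t * (Q / 2) + c * Real.sqrt S := by
    intro t ht
    have hz := h fun i => t * x i / (d i)^2
    have hlin : ∑ i, t * x i / (d i)^2 * x i = t * S := by
      rw [Finset.mul_sum]
      exact Finset.sum_congr rfl fun i _ => by field_simp [hd i]
    have hquad : ∑ i, (t * x i / (d i)^2)^2 = t^2 * Q := by
      rw [Finset.mul_sum]
      exact Finset.sum_congr rfl fun i _ => by field_simp [hd i]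
    have hnorm : ∑ i, (d i * (t * x i / (d i)^2))^2 = t^2 * S := by
      rw [Finset.mul_sum]
      exact Finset.sum_congr rfl fun i _ => by field_simp [hd i]
    rw [hlin, hquad, hnorm, Real.sqrt_mul (sq_nonneg t), Real.sqrt_sq ht.le] at hz
    have : t * S ≤ t * (t * (Q / 2) + c * Real.sqrt S) := by linarith
    exact le_of_mul_le_mul_left this ht
  have hS : S ≤ c * Real.sqrt S := le_of_forall_pos_le_mul_add along_ray
  have hS_nonneg : 0 ≤ S := Finset.sum_nonneg fun i _ => sq_nonneg _
  nlinarith [Real.sq_sqrt hS_nonneg, Real.sqrt_nonneg S]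

end WeightedNorm

/-- `0` is a global minimizer of `F(z) = (1/2)‖z−x‖₂² + αλ‖Dz‖₂` if and only if
`‖D⁻¹x‖₂ ≤ αλ`, for a positive definite diagonal matrix `D = diag(d₁,…,dₙ)`. -/
theorem stmt_1 (n : ℕ) (d x : Fin n → ℝ) (hd : ∀ i, 0 < d i) (α lam : ℝ)
    (hα : 0 < α) (hlam : 0 < lam) :
    (∀ z : Fin n → ℝ,
        (1/2) * (∑ i, (x i)^2) ≤
        (1/2) * (∑ i, (z i - x i)^2) + α * lam * Real.sqrt (∑ i, (d i * z i)^2)) ↔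
      Real.sqrt (∑ i, (x i / d i)^2) ≤ α * lam := by
  have hd' : ∀ i, d i ≠ 0 := fun i => (hd i).ne'
  rw [forall_half_sum_sq_le_iff]
  refine ⟨sqrt_sum_div_sq_le_of_forall_sum_mul_le hd' (mul_pos hα hlam).le, fun hle z => ?_⟩
  have hz2 : 0 ≤ ∑ i, (z i)^2 := Finset.sum_nonneg fun i _ => sq_nonneg _
  linarith [sum_mul_le_of_sqrt_sum_div_sq_le hd' z hle]
end

section
/- Let D = diag(d₁,…,dₙ) with all dᵢ > 0, α, λ > 0, and x ∈ ℝⁿ with ‖D⁻¹x‖₂ > αλ. Then the function G(θ) = Σᵢ [dᵢxᵢ/(θ + αλdᵢ²)]² has a unique positive solution θ* > 0 of G(θ*) = 1. -/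
/-- If `‖D⁻¹x‖₂ > αλ` then `G(θ) = Σᵢ [dᵢxᵢ/(θ + αλdᵢ²)]²` has a unique positive
solution `θ* > 0` of `G(θ*) = 1`. -/
theorem stmt_2 (n : ℕ) (d x : Fin n → ℝ) (hd : ∀ i, 0 < d i) (α lam : ℝ)
    (hα : 0 < α) (hlam : 0 < lam)
    (hx : α * lam < Real.sqrt (∑ i, (x i / d i)^2)) :
    ∃! θ : ℝ, 0 < θ ∧ ∑ i, (d i * x i / (θ + α * lam * (d i)^2))^2 = 1 := by
  set G : ℝ → ℝ := fun θ => ∑ i, (d i * x i / (θ + α * lam * (d i)^2))^2 with hGdef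
  have hal : 0 < α * lam := mul_pos hα hlam
  have hc : ∀ i, 0 < α * lam * (d i)^2 := fun i => mul_pos hal (pow_pos (hd i) 2)
  have hS : (α * lam)^2 < ∑ i, (x i / d i)^2 := by
    have h0 : 0 ≤ ∑ i, (x i / d i)^2 := Finset.sum_nonneg fun i _ => sq_nonneg _
    nlinarith [Real.sq_sqrt h0, Real.sqrt_nonneg (∑ i, (x i / d i)^2)]
  have hG0 : 1 < G 0 := by
    have hEq : G 0 = (∑ i, (x i / d i)^2) / (α*lam)^2 := by
      rw [hGdef, Finset.sum_div]
      refine Finset.sum_congr rfl fun i _ => ?_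
      have hdi := (hd i).ne'
      field_simp
      ring
    rw [hEq, lt_div_iff₀ (pow_pos hal 2)]
    linarith
  -- some coordinate is nonzero
  have exi : ∃ i, x i ≠ 0 := by
    by_contra h
    push_neg at h
    have : (∑ i, (x i / d i)^2) = 0 := by
      refine Finset.sum_eq_zero fun i _ => by rw [h i]; simp
    nlinarith [sq_nonneg (α * lam)]
  -- strict antitonicity on [0, ∞)
  have hanti : StrictAntiOn G (Set.Ici (0:ℝ)) := by
    intro a ha b hb hab
    obtain ⟨i₀, hi₀⟩ := exi
    apply Finset.sum_lt_sum
    · intro i _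
      have h1 : 0 < a + α * lam * (d i)^2 := add_pos_of_nonneg_of_pos ha (hc i)
      rw [div_pow, div_pow]
      exact div_le_div_of_nonneg_left (sq_nonneg _) (pow_pos h1 2) (by nlinarith)
    · refine ⟨i₀, Finset.mem_univ i₀, ?_⟩
      have h1 : 0 < a + α * lam * (d i₀)^2 := add_pos_of_nonneg_of_pos ha (hc i₀)
      rw [div_pow, div_pow]
      have hne : d i₀ * x i₀ ≠ 0 := mul_ne_zero (hd i₀).ne' hi₀
      have hnum : 0 < (d i₀ * x i₀)^2 :=
        lt_of_le_of_ne (sq_nonneg _) (Ne.symm (pow_ne_zero 2 hne))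
      exact div_lt_div_of_pos_left hnum (pow_pos h1 2) (by nlinarith)
  -- large M with G M < 1
  set T : ℝ := ∑ i, (d i * x i)^2 with hT
  have hT0 : 0 ≤ T := Finset.sum_nonneg fun i _ => sq_nonneg _
  set M : ℝ := 1 + T with hM
  have hM0 : 0 < M := by linarith
  have hGM : G M < 1 := by
    have hle : G M ≤ T / M^2 := by
      rw [hGdef, hT, Finset.sum_div]
      refine Finset.sum_le_sum fun i _ => ?_
      rw [div_pow]
      have h1 : 0 < M + α * lam * (d i)^2 := add_pos hM0 (hc i)
      exact div_le_div_of_nonneg_left (sq_nonneg _) (pow_pos hM0 2) (by nlinarith [hc i])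
    have hlt : T / M^2 < 1 := by
      rw [div_lt_one (pow_pos hM0 2)]
      nlinarith
    linarith
  -- continuity on [0, M]
  have hcont : ContinuousOn G (Set.Icc 0 M) := by
    apply continuousOn_finset_sum
    intro i _
    apply ContinuousOn.pow
    apply ContinuousOn.div continuousOn_const
    · exact (continuous_id.add continuous_const).continuousOn
    · intro θ hθ
      have : 0 < θ + α * lam * (d i)^2 := add_pos_of_nonneg_of_pos hθ.1 (hc i)
      exact this.ne'
  -- IVT
  have h1mem : (1:ℝ) ∈ Set.Icc (G M) (G 0) := ⟨le_of_lt hGM, le_of_lt hG0⟩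
  obtain ⟨θ, hθmem, hθeq⟩ := intermediate_value_Icc' (le_of_lt hM0) hcont h1mem
  have hθpos : 0 < θ := by
    rcases eq_or_lt_of_le hθmem.1 with h | h
    · exfalso; rw [← h] at hθeq; rw [← hθeq] at hG0; exact lt_irrefl _ hG0
    · exact h
  refine ⟨θ, ⟨hθpos, hθeq⟩, ?_⟩
  rintro θ' ⟨hθ'pos, hθ'eq⟩
  exact hanti.injOn (le_of_lt hθ'pos) (le_of_lt hθpos) (hθ'eq.trans hθeq.symm)
end

section
/- Let D = diag(d₁,…,dₙ) with dᵢ > 0, α, λ > 0, h(x) = λ‖x‖₂, and x ∈ ℝⁿ with ‖D⁻¹x‖₂ > αλ. If θ* > 0 satisfies Σᵢ [dᵢxᵢ/(θ* + αλdᵢ²)]² = 1, then the vector z* with coordinates zᵢ* = θ*xᵢ/(θ* + αλdᵢ²) is the unique global minimizer of F(z) = (1/2)‖z−x‖₂² + αλ‖Dz‖₂, i.e., z* = prox_{αh∘D}(x), and moreover ‖Dz*‖₂ = θ*. -/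
/-- If `‖D⁻¹x‖₂ > αλ` and `θ* > 0` solves `Σᵢ [dᵢxᵢ/(θ* + αλdᵢ²)]² = 1`, then
`z*ᵢ = θ*xᵢ/(θ* + αλdᵢ²)` is the unique global minimizer of
`F(z) = (1/2)‖z−x‖₂² + αλ‖Dz‖₂`, and moreover `‖Dz*‖₂ = θ*`. -/
theorem stmt_4 (n : ℕ) (d x : Fin n → ℝ) (hd : ∀ i, 0 < d i) (α lam θ : ℝ)
    (hα : 0 < α) (hlam : 0 < lam) (hθ : 0 < θ)
    (hx : α * lam < Real.sqrt (∑ i, (x i / d i)^2))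
    (heq : ∑ i, (d i * x i / (θ + α * lam * (d i)^2))^2 = 1) :
    (∀ z : Fin n → ℝ, z ≠ (fun i => θ * x i / (θ + α * lam * (d i)^2)) →
      (1/2) * (∑ i, (θ * x i / (θ + α * lam * (d i)^2) - x i)^2) +
        α * lam * Real.sqrt (∑ i, (d i * (θ * x i / (θ + α * lam * (d i)^2)))^2) <
      (1/2) * (∑ i, (z i - x i)^2) + α * lam * Real.sqrt (∑ i, (d i * z i)^2)) ∧
    Real.sqrt (∑ i, (d i * (θ * x i / (θ + α * lam * (d i)^2)))^2) = θ := by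
  have hc : ∀ i, 0 < θ + α * lam * (d i)^2 := fun i => by
    have := hd i; positivity
  set w : Fin n → ℝ := fun i => θ * x i / (θ + α * lam * (d i)^2) with hw
  have hwA : ∀ i, θ * x i / (θ + α * lam * (d i)^2) = w i := fun i => by rw [hw]
  have hDw : ∑ i, (d i * w i)^2 = θ^2 := by
    have hterm : ∀ i ∈ Finset.univ, (d i * w i)^2
        = θ^2 * (d i * x i / (θ + α * lam * (d i)^2))^2 := by
      intro i _
      simp only [hw]
      have := (hc i).ne'
      field_simp
    rw [Finset.sum_congr rfl hterm, ← Finset.mul_sum, heq, mul_one]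
  have hsqrtDw : Real.sqrt (∑ i, (d i * w i)^2) = θ := by
    rw [hDw, Real.sqrt_sq hθ.le]
  have hal : 0 < α * lam := mul_pos hα hlam
  simp only [hwA]
  constructor
  · intro z hz
    have hz' : z ≠ w := hz
    set S := Real.sqrt (∑ i, (d i * z i)^2) with hS
    have hSnn : 0 ≤ S := Real.sqrt_nonneg _
    set P := ∑ i, (d i * w i) * (d i * z i) with hP
    have hPle : P ≤ θ * S := by
      have h2 : P^2 ≤ (∑ i, (d i * w i)^2) * ∑ i, (d i * z i)^2 :=
        Finset.sum_mul_sq_le_sq_mul_sq _ _ _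
      calc P ≤ |P| := le_abs_self P
        _ = Real.sqrt (P^2) := (Real.sqrt_sq_eq_abs P).symm
        _ ≤ Real.sqrt ((∑ i, (d i * w i)^2) * ∑ i, (d i * z i)^2) := Real.sqrt_le_sqrt h2
        _ = θ * S := by
            rw [Real.sqrt_mul (by positivity), hsqrtDw]
    set Q := ∑ i, (z i - w i)^2 with hQdef
    have hQ : 0 < Q := by
      obtain ⟨i, hi⟩ := Function.ne_iff.mp hz'
      refine Finset.sum_pos' (fun j _ => sq_nonneg _) ⟨i, Finset.mem_univ i, ?_⟩
      have h := sub_ne_zero_of_ne hi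
      positivity
    set T := ∑ i, (w i - x i) * (z i - w i) with hTdef
    have hT : θ * T = α * lam * (θ^2 - P) := by
      have hterm : ∀ i ∈ Finset.univ, θ * ((w i - x i) * (z i - w i))
          = α * lam * ((d i * w i)^2 - (d i * w i) * (d i * z i)) := by
        intro i _
        simp only [hw]
        have := (hc i).ne'
        field_simp
        ring
      rw [hTdef, Finset.mul_sum, Finset.sum_congr rfl hterm, ← Finset.mul_sum,
        Finset.sum_sub_distrib, hDw, ← hP]
    have hexp : ∑ i, (z i - x i)^2 = (∑ i, (w i - x i)^2) + 2 * T + Q := by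
      have hterm : ∀ i ∈ Finset.univ, (z i - x i)^2
          = (w i - x i)^2 + 2 * ((w i - x i) * (z i - w i)) + (z i - w i)^2 := by
        intro i _; ring
      rw [Finset.sum_congr rfl hterm, Finset.sum_add_distrib, Finset.sum_add_distrib,
        ← Finset.mul_sum, hTdef, hQdef]
    have key : α * lam * θ < T + Q / 2 + α * lam * S := by
      have e : θ * (T + Q / 2 + α * lam * S - α * lam * θ)
          = α * lam * (θ * S - P) + θ * Q / 2 := by
        linear_combination hT
      have h1 : 0 ≤ α * lam * (θ * S - P) :=
        mul_nonneg hal.le (sub_nonneg.mpr hPle)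
      have h2 : 0 < θ * (T + Q / 2 + α * lam * S - α * lam * θ) := by
        rw [e]; nlinarith [mul_pos hθ hQ]
      nlinarith [h2, hθ]
    rw [hsqrtDw]
    linarith [hexp, key]
  · exact hsqrtDw
end

section
/- Weighted proximal operator of ℓ₂: Let D = diag(d₁,…,dₙ) with dᵢ > 0, α, λ > 0, h(x) = λ‖x‖₂, and x ∈ ℝⁿ. If ‖Dx‖₂ ≤ αλ then prox_{αh}^D(x) = 0. If ‖Dx‖₂ > αλ then [prox_{αh}^D(x)]ᵢ = dᵢθ*xᵢ/(dᵢθ* + αλ), where θ* > 0 is the unique positive solution of Σᵢ [dᵢxᵢ/(dᵢθ* + αλ)]² = 1. -/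
set_option maxHeartbeats 1600000 in
/-- Weighted proximal operator of ℓ₂: if `p` is the unique minimizer of
`z ↦ (1/2)⟨z−x, D(z−x)⟩ + αλ‖z‖₂` with `D = diag(d)` positive definite, then
`p = 0` when `‖Dx‖₂ ≤ αλ`, and otherwise `pᵢ = dᵢθ*xᵢ/(dᵢθ* + αλ)` where `θ* > 0`
is the unique positive solution of `Σᵢ [dᵢxᵢ/(dᵢθ* + αλ)]² = 1`. -/
theorem stmt_5 (n : ℕ) (d x p : Fin n → ℝ) (hd : ∀ i, 0 < d i) (α lam : ℝ)
    (hα : 0 < α) (hlam : 0 < lam)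
    (hp : ∀ z : Fin n → ℝ, z ≠ p →
      (1/2) * (∑ i, d i * (p i - x i)^2) + α * lam * Real.sqrt (∑ i, (p i)^2) <
      (1/2) * (∑ i, d i * (z i - x i)^2) + α * lam * Real.sqrt (∑ i, (z i)^2)) :
    (Real.sqrt (∑ i, (d i * x i)^2) ≤ α * lam → p = 0) ∧
    (α * lam < Real.sqrt (∑ i, (d i * x i)^2) →
      ∃ θ : ℝ, (0 < θ ∧ ∑ i, (d i * x i / (d i * θ + α * lam))^2 = 1) ∧
        (∀ θ' : ℝ, (0 < θ' ∧ ∑ i, (d i * x i / (d i * θ' + α * lam))^2 = 1) → θ' = θ) ∧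
        ∀ i, p i = d i * θ * x i / (d i * θ + α * lam)) := by
  have hal : 0 < α * lam := mul_pos hα hlam
  -- if q is a (weak) global minimizer, then p = q
  have minEq : ∀ q : Fin n → ℝ,
      (∀ z : Fin n → ℝ, (1/2) * (∑ i, d i * (q i - x i)^2) + α * lam * Real.sqrt (∑ i, (q i)^2) ≤
            (1/2) * (∑ i, d i * (z i - x i)^2) + α * lam * Real.sqrt (∑ i, (z i)^2)) →
      p = q := by
    intro q hq
    by_contra h
    have h1 := hp q (Ne.symm h)
    have h2 := hq p
    linarith
  constructor
  · -- Part 1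
    intro hle
    apply minEq 0
    intro z
    have cs : ∑ i, (d i * x i) * z i ≤
        Real.sqrt (∑ i, (d i * x i)^2) * Real.sqrt (∑ i, (z i)^2) :=
      Real.sum_mul_le_sqrt_mul_sqrt _ _ _
    have hz : (0:ℝ) ≤ Real.sqrt (∑ i, (z i)^2) := Real.sqrt_nonneg _
    have h3 : Real.sqrt (∑ i, (d i * x i)^2) * Real.sqrt (∑ i, (z i)^2) ≤
        α * lam * Real.sqrt (∑ i, (z i)^2) := mul_le_mul_of_nonneg_right hle hz
    have hzz : (0:ℝ) ≤ ∑ i, d i * (z i)^2 :=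
      Finset.sum_nonneg fun i _ => mul_nonneg (hd i).le (sq_nonneg _)
    have expand : ∑ i, d i * (z i - x i)^2 =
        (∑ i, d i * (x i)^2) - 2*(∑ i, (d i * x i) * z i) + (∑ i, d i * (z i)^2) := by
      rw [two_mul, ← Finset.sum_add_distrib, ← Finset.sum_sub_distrib, ← Finset.sum_add_distrib]
      exact Finset.sum_congr rfl fun i _ => by ring
    simp only [Pi.zero_apply, ne_eq]
    rw [show ∑ i : Fin n, ((0:ℝ))^2 = 0 by simp, Real.sqrt_zero]
    have e0 : ∑ i, d i * ((0:ℝ) - x i)^2 = ∑ i, d i * (x i)^2 :=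
      Finset.sum_congr rfl fun i _ => by ring
    rw [e0]
    linarith
  · -- Part 2
    intro hgt
    have hsum_nonneg : (0:ℝ) ≤ ∑ i, (d i * x i)^2 :=
      Finset.sum_nonneg fun i _ => sq_nonneg _
    have hDx2 : (α * lam)^2 < ∑ i, (d i * x i)^2 := by
      have hs := Real.sq_sqrt hsum_nonneg
      nlinarith [Real.sqrt_nonneg (∑ i, (d i * x i)^2)]
    set g : ℝ → ℝ := fun θ => ∑ i, (d i * x i / (d i * θ + α * lam))^2 with hg
    have hx_ne : ∃ i : Fin n, d i * x i ≠ 0 := by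
      by_contra hc
      push_neg at hc
      have : ∑ i, (d i * x i)^2 = 0 := Finset.sum_eq_zero fun i _ => by rw [hc i]; ring
      rw [this] at hDx2
      nlinarith
    -- g is strictly decreasing on positives
    have mono : ∀ a b : ℝ, 0 ≤ a → a < b → g b < g a := by
      intro a b ha hab
      apply Finset.sum_lt_sum
      · intro i _
        have hda : 0 < d i * a + α * lam := by nlinarith [hd i]
        have hdb : 0 < d i * b + α * lam := by nlinarith [hd i]
        rw [div_pow, div_pow, div_le_div_iff₀ (by positivity) (by positivity)]
        have hlt2 : (d i * a + α * lam)^2 ≤ (d i * b + α * lam)^2 := by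
          nlinarith [mul_pos (hd i) (sub_pos.2 hab)]
        exact mul_le_mul_of_nonneg_left hlt2 (sq_nonneg _)
      · obtain ⟨i, hi⟩ := hx_ne
        refine ⟨i, Finset.mem_univ i, ?_⟩
        have hda : 0 < d i * a + α * lam := by nlinarith [hd i]
        have hdb : 0 < d i * b + α * lam := by nlinarith [hd i]
        have hix : 0 < (d i * x i)^2 := by positivity
        rw [div_pow, div_pow, div_lt_div_iff₀ (by positivity) (by positivity)]
        have hlt2 : (d i * a + α * lam)^2 < (d i * b + α * lam)^2 := by
          nlinarith [mul_pos (hd i) (sub_pos.2 hab)]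
        exact mul_lt_mul_of_pos_left hlt2 hix
    -- value at 0
    have hg0 : 1 < g 0 := by
      have e : g 0 = (∑ i, (d i * x i)^2) / (α * lam)^2 := by
        show ∑ i, (d i * x i / (d i * 0 + α * lam))^2 = _
        rw [Finset.sum_div]
        exact Finset.sum_congr rfl fun i _ => by rw [mul_zero, zero_add, div_pow]
      rw [e, lt_div_iff₀ (by positivity), one_mul]
      exact hDx2
    -- value at T = sqrt(∑ x²) + 1
    set T : ℝ := Real.sqrt (∑ i, (x i)^2) + 1 with hT
    have hsx : (0:ℝ) ≤ Real.sqrt (∑ i, (x i)^2) := Real.sqrt_nonneg _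
    have hT1 : (1:ℝ) ≤ T := by rw [hT]; linarith
    have hT0 : (0:ℝ) < T := by linarith
    have hgT : g T < 1 := by
      have hterm : ∀ i : Fin n, (d i * x i / (d i * T + α * lam))^2 ≤ (x i)^2 / T^2 := by
        intro i
        have hdT : 0 < d i * T + α * lam := by nlinarith [hd i]
        rw [div_pow, div_le_div_iff₀ (by positivity) (by positivity)]
        nlinarith [hd i, sq_nonneg (x i), sq_nonneg (x i * (α * lam)),
          mul_pos (mul_pos (hd i) hT0) hal, sq_nonneg (x i * d i * T)]
      have hsumle : g T ≤ (∑ i, (x i)^2) / T^2 := by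
        show (∑ i, (d i * x i / (d i * T + α * lam))^2) ≤ _
        rw [Finset.sum_div]
        exact Finset.sum_le_sum fun i _ => hterm i
      have hxsq : ∑ i, (x i)^2 = (T - 1)^2 := by
        rw [hT, add_sub_cancel_right, Real.sq_sqrt (Finset.sum_nonneg fun i _ => sq_nonneg _)]
      have : (∑ i, (x i)^2) / T^2 < 1 := by
        rw [div_lt_one (by positivity), hxsq]
        nlinarith
      linarith
    -- continuity on [0, T]
    have hcont : ContinuousOn g (Set.Icc 0 T) := by
      apply continuousOn_finset_sum
      intro i _
      apply ContinuousOn.pow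
      apply ContinuousOn.div continuousOn_const
      · exact ((continuous_const.mul continuous_id).add continuous_const).continuousOn
      · intro θ hθ
        have := hθ.1
        have : 0 < d i * θ + α * lam := by nlinarith [hd i]
        exact ne_of_gt this
    -- IVT
    have hmem : (1:ℝ) ∈ Set.Icc (g T) (g 0) := ⟨hgT.le, hg0.le⟩
    obtain ⟨θ, hθmem, hθ1⟩ := intermediate_value_Icc' hT0.le hcont hmem
    have hθpos : 0 < θ := by
      rcases lt_or_eq_of_le hθmem.1 with h | h
      · exact h
      · exfalso; rw [← h] at hθ1; rw [hθ1] at hg0; exact lt_irrefl _ hg0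
    have huniq : ∀ θ' : ℝ, (0 < θ' ∧ g θ' = 1) → θ' = θ := by
      intro θ' ⟨hθ'pos, hθ'1⟩
      rcases lt_trichotomy θ' θ with h | h | h
      · have := mono θ' θ hθ'pos.le h; rw [hθ1, hθ'1] at this; linarith
      · exact h
      · have := mono θ θ' hθpos.le h; rw [hθ1, hθ'1] at this; linarith
    refine ⟨θ, ⟨hθpos, hθ1⟩, huniq, ?_⟩
    -- the explicit minimizer
    set q : Fin n → ℝ := fun i => d i * θ * x i / (d i * θ + α * lam) with hq
    have hden : ∀ i, 0 < d i * θ + α * lam := fun i => by nlinarith [hd i]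
    have sumq : ∑ i, (q i)^2 = θ^2 := by
      have : ∀ i : Fin n, (q i)^2 = θ^2 * (d i * x i / (d i * θ + α * lam))^2 := by
        intro i
        rw [hq]
        field_simp
      rw [Finset.sum_congr rfl fun i _ => this i, ← Finset.mul_sum]
      have hθ1' : ∑ i, (d i * x i / (d i * θ + α * lam))^2 = 1 := hθ1
      rw [hθ1', mul_one]
    have sqrtq : Real.sqrt (∑ i, (q i)^2) = θ := by
      rw [sumq]; exact Real.sqrt_sq hθpos.le
    have st : ∀ i, d i * (q i - x i) = -(α * lam / θ) * q i := by
      intro i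
      have h1 := (hden i).ne'
      have h2 := hθpos.ne'
      rw [hq]
      field_simp
      ring
    clear_value q g T
    have hmin : ∀ z : Fin n → ℝ, (1/2) * (∑ i, d i * (q i - x i)^2) + α * lam * Real.sqrt (∑ i, (q i)^2) ≤
        (1/2) * (∑ i, d i * (z i - x i)^2) + α * lam * Real.sqrt (∑ i, (z i)^2) := by
      intro z
      have cs : ∑ i, q i * z i ≤ θ * Real.sqrt (∑ i, (z i)^2) := by
        calc ∑ i, q i * z i ≤ Real.sqrt (∑ i, (q i)^2) * Real.sqrt (∑ i, (z i)^2) :=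
              Real.sum_mul_le_sqrt_mul_sqrt _ _ _
        _ = θ * Real.sqrt (∑ i, (z i)^2) := by rw [sqrtq]
      have quad : ∀ i : Fin n, d i * (q i - x i) * (z i - q i) ≤
          (1/2) * (d i * (z i - x i)^2) - (1/2) * (d i * (q i - x i)^2) := by
        intro i
        have hr : (1/2) * (d i * (z i - x i)^2) - (1/2) * (d i * (q i - x i)^2)
            - d i * (q i - x i) * (z i - q i) = (1/2) * (d i * (z i - q i)^2) := by ring
        linarith [hr, mul_nonneg (hd i).le (sq_nonneg (z i - q i))]
      have sum1 : ∑ i, d i * (q i - x i) * (z i - q i) ≤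
          (1/2) * (∑ i, d i * (z i - x i)^2) - (1/2) * (∑ i, d i * (q i - x i)^2) := by
        rw [Finset.mul_sum, Finset.mul_sum, ← Finset.sum_sub_distrib]
        exact Finset.sum_le_sum fun i _ => quad i
      have sum2 : ∑ i, d i * (q i - x i) * (z i - q i) =
          -(α * lam / θ) * (∑ i, q i * z i) + (α * lam / θ) * (∑ i, (q i)^2) := by
        rw [Finset.mul_sum, Finset.mul_sum, ← Finset.sum_add_distrib]
        refine Finset.sum_congr rfl fun i _ => ?_
        linear_combination (z i - q i) * st i
      have hc : 0 < α * lam / θ := by positivity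
      have h4 : (α * lam / θ) * (∑ i, q i * z i) ≤
          (α * lam / θ) * (θ * Real.sqrt (∑ i, (z i)^2)) :=
        mul_le_mul_of_nonneg_left cs hc.le
      have haux : ∀ Z : ℝ, (α * lam / θ) * (θ * Z) = α * lam * Z := by
        intro Z
        field_simp
      have h5 : (α * lam / θ) * (θ * Real.sqrt (∑ i, (z i)^2)) =
          α * lam * Real.sqrt (∑ i, (z i)^2) := haux _
      have h6 : (α * lam / θ) * (∑ i, (q i)^2) = α * lam * θ := by
        rw [sumq]
        have : θ^2 = θ * θ := sq θ
        rw [this, ← mul_assoc, div_mul_cancel₀ _ hθpos.ne']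
      rw [sqrtq]
      linarith
    have hpq := minEq q hmin
    intro i
    rw [hpq, hq]
end

section
/- Approximation error of the weighted proximal operator of ℓ₂: Let D = diag(d₁,…,dₙ) with dᵢ > 0, α, λ > 0, x ∈ ℝⁿ with ‖Dx‖₂ > αλ, and let θ* > 0 be the unique solution of Σᵢ [dᵢxᵢ/(dᵢθ* + αλ)]² = 1. If θ̃ > 0 satisfies |θ̃ − θ*| ≤ ε, and z̃ᵢ = dᵢθ̃xᵢ/(dᵢθ̃ + αλ), zᵢ* = dᵢθ*xᵢ/(dᵢθ* + αλ), then ‖z̃ − z*‖₂ ≤ ε. -/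
/-- Approximation error of the weighted proximal operator of ℓ₂: if
`|θ̃ − θ*| ≤ ε` where `θ*` solves the normalization equation, then the induced
error on the proximal point is at most `ε` in the Euclidean norm. -/
theorem stmt_6 (n : ℕ) (d x : Fin n → ℝ) (hd : ∀ i, 0 < d i) (α lam ε θs θt : ℝ)
    (hα : 0 < α) (hlam : 0 < lam) (hε : 0 < ε)
    (hx : α * lam < Real.sqrt (∑ i, (d i * x i)^2))
    (hθs : 0 < θs) (heq : ∑ i, (d i * x i / (d i * θs + α * lam))^2 = 1)
    (hθt : 0 < θt) (happrox : |θt - θs| ≤ ε) :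
    Real.sqrt (∑ i, (d i * θt * x i / (d i * θt + α * lam) -
        d i * θs * x i / (d i * θs + α * lam))^2) ≤ ε := by
  have hc : 0 < α * lam := mul_pos hα hlam
  have key : ∑ i, (d i * θt * x i / (d i * θt + α * lam) -
      d i * θs * x i / (d i * θs + α * lam))^2 ≤ ε^2 := by
    have hstep : ∀ i ∈ Finset.univ, (d i * θt * x i / (d i * θt + α * lam) -
        d i * θs * x i / (d i * θs + α * lam))^2 ≤
        (θt - θs)^2 * (d i * x i / (d i * θs + α * lam))^2 := by
      intro i _
      have hP : 0 < d i * θt + α * lam := add_pos (mul_pos (hd i) hθt) hc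
      have hQ : 0 < d i * θs + α * lam := add_pos (mul_pos (hd i) hθs) hc
      have hdiff : d i * θt * x i / (d i * θt + α * lam) -
          d i * θs * x i / (d i * θs + α * lam) =
          ((θt - θs) * (d i * x i / (d i * θs + α * lam))) * (α * lam / (d i * θt + α * lam)) := by
        field_simp
        ring
      rw [hdiff, mul_pow]
      have h1 : (α * lam / (d i * θt + α * lam))^2 ≤ 1 := by
        rw [sq_le_one_iff_abs_le_one, abs_div, abs_of_pos hc, abs_of_pos hP,
          div_le_one hP]
        nlinarith [mul_pos (hd i) hθt]
      calc ((θt - θs) * (d i * x i / (d i * θs + α * lam)))^2 *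
            (α * lam / (d i * θt + α * lam))^2
          ≤ ((θt - θs) * (d i * x i / (d i * θs + α * lam)))^2 * 1 := by
            apply mul_le_mul_of_nonneg_left h1 (by positivity)
        _ = (θt - θs)^2 * (d i * x i / (d i * θs + α * lam))^2 := by ring
    calc ∑ i, (d i * θt * x i / (d i * θt + α * lam) -
          d i * θs * x i / (d i * θs + α * lam))^2
        ≤ ∑ i, (θt - θs)^2 * (d i * x i / (d i * θs + α * lam))^2 :=
          Finset.sum_le_sum hstep
      _ = (θt - θs)^2 := by rw [← Finset.mul_sum, heq, mul_one]
      _ ≤ ε^2 := by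
          rw [← sq_abs]
          exact pow_le_pow_left₀ (abs_nonneg _) happrox 2
  calc Real.sqrt _ ≤ Real.sqrt (ε^2) := Real.sqrt_le_sqrt key
    _ = ε := Real.sqrt_sq hε.le
end

section
/- Bounds on θ* for the ℓ₂ penalty: Let D = diag(d₁,…,dₙ) with dᵢ > 0, d_min = minᵢ dᵢ, d_max = maxᵢ dᵢ, α, λ > 0, and x ∈ ℝⁿ with ‖Dx‖₂ > αλ. If θ* > 0 satisfies Σᵢ [dᵢxᵢ/(dᵢθ* + αλ)]² = 1, then (‖Dx‖₂ − αλ)/d_max ≤ θ* ≤ (‖Dx‖₂ − αλ)/d_min. -/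
/-- Bounds on `θ*` for the ℓ₂ penalty: if `‖Dx‖₂ > αλ` and `θ* > 0` satisfies
`Σᵢ [dᵢxᵢ/(dᵢθ* + αλ)]² = 1`, then
`(‖Dx‖₂ − αλ)/d_max ≤ θ* ≤ (‖Dx‖₂ − αλ)/d_min`. -/
theorem stmt_7 (n : ℕ) (d x : Fin n → ℝ) (hd : ∀ i, 0 < d i) (α lam θ dmin dmax : ℝ)
    (hα : 0 < α) (hlam : 0 < lam)
    (hmin : ∀ i, dmin ≤ d i) (hmax : ∀ i, d i ≤ dmax) (hdmin : 0 < dmin)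
    (hx : α * lam < Real.sqrt (∑ i, (d i * x i)^2))
    (hθ : 0 < θ) (heq : ∑ i, (d i * x i / (d i * θ + α * lam))^2 = 1) :
    (Real.sqrt (∑ i, (d i * x i)^2) - α * lam) / dmax ≤ θ ∧
    θ ≤ (Real.sqrt (∑ i, (d i * x i)^2) - α * lam) / dmin := by
  rcases Nat.eq_zero_or_pos n with h0 | hn
  · subst h0; simp at heq
  have ⟨i0⟩ := Fin.pos_iff_nonempty.mp hn
  have hdmax : 0 < dmax := lt_of_lt_of_le (hd i0) (hmax i0)
  set S := Real.sqrt (∑ i, (d i * x i)^2) with hSdef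
  have hsum_nonneg : 0 ≤ ∑ i, (d i * x i)^2 :=
    Finset.sum_nonneg fun i _ => sq_nonneg _
  have hS2 : S^2 = ∑ i, (d i * x i)^2 := Real.sq_sqrt hsum_nonneg
  have hal : 0 < α * lam := mul_pos hα hlam
  have hA : 0 < dmin * θ + α * lam := by positivity
  have hB : 0 < dmax * θ + α * lam := by positivity
  have hdenom : ∀ i : Fin n, 0 < d i * θ + α * lam := fun i => by
    have := hd i; positivity
  have key1 : ∑ i, (d i * x i)^2 / (dmax * θ + α * lam)^2 ≤ 1 := by
    rw [← heq]
    apply Finset.sum_le_sum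
    intro i _
    rw [div_pow]
    apply div_le_div_of_nonneg_left (sq_nonneg _) (pow_pos (hdenom i) 2)
    apply pow_le_pow_left₀ (le_of_lt (hdenom i))
    nlinarith [hmax i, hθ]
  have key2 : 1 ≤ ∑ i, (d i * x i)^2 / (dmin * θ + α * lam)^2 := by
    rw [← heq]
    apply Finset.sum_le_sum
    intro i _
    rw [div_pow]
    apply div_le_div_of_nonneg_left (sq_nonneg _) (by positivity)
    apply pow_le_pow_left₀ (le_of_lt hA)
    nlinarith [hmin i, hθ]
  rw [← Finset.sum_div, ← hS2, div_le_one (by positivity)] at key1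
  rw [← Finset.sum_div, ← hS2, le_div_iff₀ (by positivity), one_mul] at key2
  have hSle : S ≤ dmax * θ + α * lam := by nlinarith [Real.sqrt_nonneg (∑ i, (d i * x i)^2)]
  have hSge : dmin * θ + α * lam ≤ S := by nlinarith [Real.sqrt_nonneg (∑ i, (d i * x i)^2)]
  constructor
  · rw [div_le_iff₀ hdmax]; nlinarith
  · rw [le_div_iff₀ hdmin]; nlinarith
end

section
/- Let D = diag(d₁,…,dₙ) with dᵢ > 0, α, β, λ > 0 with β > α·d_max², where d_max = maxᵢ dᵢ. If z* is a global minimizer of F(z) = (1/2)‖z−x‖₂² + α·MCP(‖Dz‖₂; β, λ) and ‖Dz*‖₂ > βλ, then z* = x. Conversely, if ‖Dx‖₂ > βλ, then x is the unique global minimizer. -/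
/-!
Beyond the threshold `βλ` the penalty is flat at its maximum `βλ²/2`, so a minimizer `z*` with
`‖Dz*‖ > βλ` pays the maximal penalty and can do no better than `x`, which pays at most that
much and has zero fidelity term; hence `z* = x`. Conversely, let `‖Dx‖ > βλ` and `z ≠ x`. If
`‖Dz‖ > βλ` as well, `z` pays the same penalty and a positive fidelity term. Otherwise the penalty
saved by `z` is `α(βλ - ‖Dz‖)²/(2β) < α(‖Dx‖ - ‖Dz‖)²/(2β) ≤ α‖D(x - z)‖²/(2β) ≤ ‖z - x‖²/2`,
the last step because `α dᵢ² ≤ β`.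
-/

noncomputable def MCP (β lam t : ℝ) : ℝ :=
  if |t| ≤ β * lam then lam * |t| - t^2 / (2*β) else β * lam^2 / 2

open Finset

section MCP

variable {β lam t : ℝ}

lemma MCP_eq_of_lt (h : β * lam < t) : MCP β lam t = β * lam ^ 2 / 2 :=
  if_neg (not_le.mpr (h.trans_le (le_abs_self t)))

lemma MCP_eq_sub_sq (hβ : β ≠ 0) (h : |t| ≤ β * lam) :
    MCP β lam t = β * lam ^ 2 / 2 - (|t| - β * lam) ^ 2 / (2 * β) := by
  rw [MCP, if_pos h, ← sq_abs t]
  field_simp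
  ring

lemma MCP_le (hβ : 0 < β) : MCP β lam t ≤ β * lam ^ 2 / 2 := by
  by_cases h : |t| ≤ β * lam
  · rw [MCP_eq_sub_sq hβ.ne' h]
    have : 0 ≤ (|t| - β * lam) ^ 2 / (2 * β) := by positivity
    linarith
  · rw [MCP, if_neg h]

/-- The scalar core of the converse: `a` and `t` play the roles of `‖Dx‖` and `‖Dz‖`, and `s` that
of `‖z - x‖²`. -/
lemma mul_MCP_lt_add_mul_MCP {α a s : ℝ} (hα : 0 < α) (hβ : 0 < β) (ht : 0 ≤ t)
    (ha : β * lam < a) (hs : 0 < s) (hgap : α * (a - t) ^ 2 ≤ β * s) :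
    α * MCP β lam a < 1 / 2 * s + α * MCP β lam t := by
  rw [MCP_eq_of_lt ha]
  rcases lt_or_ge (β * lam) t with hlt | hle
  · rw [MCP_eq_of_lt hlt]
    linarith
  rw [MCP_eq_sub_sq hβ.ne' (by rwa [abs_of_nonneg ht]), abs_of_nonneg ht]
  have hsq : (t - β * lam) ^ 2 < (a - t) ^ 2 := by
    rw [← neg_sub, neg_sq]
    exact pow_lt_pow_left₀ (by linarith) (by linarith) two_ne_zero
  have hsaved : α * ((t - β * lam) ^ 2 / (2 * β)) < 1 / 2 * s := by
    rw [← mul_div_assoc, div_lt_iff₀ (by positivity)]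
    nlinarith [mul_lt_mul_of_pos_left hsq hα]
  linarith

end MCP

section WeightedNorm

variable {ι : Type*} [Fintype ι]

lemma sqrt_sum_sq_eq_norm (v : ι → ℝ) :
    √(∑ i, v i ^ 2) = ‖(WithLp.toLp 2 v : EuclideanSpace ℝ ι)‖ := by
  simp [EuclideanSpace.norm_eq]

lemma sq_sqrt_sum_sq_sub_le (u w : ι → ℝ) :
    (√(∑ i, u i ^ 2) - √(∑ i, w i ^ 2)) ^ 2 ≤ ∑ i, (u i - w i) ^ 2 := by
  have h := abs_norm_sub_norm_le (WithLp.toLp 2 u : EuclideanSpace ℝ ι) (WithLp.toLp 2 w)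
  rw [← WithLp.toLp_sub, ← sqrt_sum_sq_eq_norm, ← sqrt_sum_sq_eq_norm, ← sqrt_sum_sq_eq_norm] at h
  calc _ = |√(∑ i, u i ^ 2) - √(∑ i, w i ^ 2)| ^ 2 := (sq_abs _).symm
    _ ≤ √(∑ i, (u - w) i ^ 2) ^ 2 := pow_le_pow_left₀ (abs_nonneg _) h 2
    _ = ∑ i, (u i - w i) ^ 2 := Real.sq_sqrt (by positivity)

lemma mul_sum_sq_mul_le {α β : ℝ} {d : ι → ℝ} (h : ∀ i, α * d i ^ 2 ≤ β) (v : ι → ℝ) :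
    α * ∑ i, (d i * v i) ^ 2 ≤ β * ∑ i, v i ^ 2 := by
  rw [mul_sum, mul_sum]
  refine sum_le_sum fun i _ => ?_
  calc α * (d i * v i) ^ 2 = (α * d i ^ 2) * v i ^ 2 := by ring
    _ ≤ β * v i ^ 2 := mul_le_mul_of_nonneg_right (h i) (sq_nonneg _)

lemma sum_sq_sub_pos {x z : ι → ℝ} (h : z ≠ x) : 0 < ∑ i, (z i - x i) ^ 2 := by
  obtain ⟨i, hi⟩ := Function.ne_iff.mp h
  have : z i - x i ≠ 0 := sub_ne_zero.mpr hi
  exact sum_pos' (fun j _ => sq_nonneg _) ⟨i, mem_univ i, by positivity⟩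

end WeightedNorm

theorem stmt_8_general (n : ℕ) (d x : Fin n → ℝ) (α β lam : ℝ)
    (hα : 0 < α) (hβ : 1 < β)
    (hβd : ∀ i, α * (d i)^2 < β) :
    (∀ zs : Fin n → ℝ,
      (∀ z : Fin n → ℝ,
        (1/2) * (∑ i, (zs i - x i)^2) + α * MCP β lam (Real.sqrt (∑ i, (d i * zs i)^2)) ≤
        (1/2) * (∑ i, (z i - x i)^2) + α * MCP β lam (Real.sqrt (∑ i, (d i * z i)^2))) →
      β * lam < Real.sqrt (∑ i, (d i * zs i)^2) → zs = x) ∧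
    (β * lam < Real.sqrt (∑ i, (d i * x i)^2) →
      ∀ z : Fin n → ℝ, z ≠ x →
        (1/2) * (∑ i, (x i - x i)^2) + α * MCP β lam (Real.sqrt (∑ i, (d i * x i)^2)) <
        (1/2) * (∑ i, (z i - x i)^2) + α * MCP β lam (Real.sqrt (∑ i, (d i * z i)^2))) := by
  have hβ0 : 0 < β := by linarith
  refine ⟨fun zs hmin hgt => ?_, fun hx z hz => ?_⟩
  · by_contra hne
    have hzs := hmin x
    rw [MCP_eq_of_lt hgt] at hzs
    have : α * MCP β lam √(∑ i, (d i * x i) ^ 2) ≤ α * (β * lam ^ 2 / 2) :=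
      mul_le_mul_of_nonneg_left (MCP_le hβ0) hα.le
    have := sum_sq_sub_pos hne
    simp only [sub_self, zero_pow two_ne_zero, sum_const_zero, mul_zero, zero_add] at hzs
    linarith
  · have hgap : α * (√(∑ i, (d i * x i) ^ 2) - √(∑ i, (d i * z i) ^ 2)) ^ 2 ≤
        β * ∑ i, (z i - x i) ^ 2 :=
      calc _ ≤ α * ∑ i, (d i * x i - d i * z i) ^ 2 :=
            mul_le_mul_of_nonneg_left (sq_sqrt_sum_sq_sub_le _ _) hα.le
        _ = α * ∑ i, (d i * (x i - z i)) ^ 2 := by simp_rw [mul_sub]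
        _ ≤ β * ∑ i, (x i - z i) ^ 2 := mul_sum_sq_mul_le (fun i => (hβd i).le) _
        _ = β * ∑ i, (z i - x i) ^ 2 := by simp_rw [← neg_sub (z _), neg_sq]
    simpa using mul_MCP_lt_add_mul_MCP hα hβ0 (Real.sqrt_nonneg _) hx (sum_sq_sub_pos hz) hgap

/-- For `F(z) = (1/2)‖z−x‖₂² + α·MCP(‖Dz‖₂; β, λ)` with `β > α·d_max²`:
any global minimizer `z*` with `‖Dz*‖₂ > βλ` equals `x`; conversely, if
`‖Dx‖₂ > βλ` then `x` is the unique global minimizer. -/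
theorem stmt_8 (n : ℕ) (d x : Fin n → ℝ) (hd : ∀ i, 0 < d i) (α β lam : ℝ)
    (hα : 0 < α) (hβ : 1 < β) (hlam : 0 < lam)
    (hβd : ∀ i, α * (d i)^2 < β) :
    (∀ zs : Fin n → ℝ,
      (∀ z : Fin n → ℝ,
        (1/2) * (∑ i, (zs i - x i)^2) + α * MCP β lam (Real.sqrt (∑ i, (d i * zs i)^2)) ≤
        (1/2) * (∑ i, (z i - x i)^2) + α * MCP β lam (Real.sqrt (∑ i, (d i * z i)^2))) →
      β * lam < Real.sqrt (∑ i, (d i * zs i)^2) → zs = x) ∧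
    (β * lam < Real.sqrt (∑ i, (d i * x i)^2) →
      ∀ z : Fin n → ℝ, z ≠ x →
        (1/2) * (∑ i, (x i - x i)^2) + α * MCP β lam (Real.sqrt (∑ i, (d i * x i)^2)) <
        (1/2) * (∑ i, (z i - x i)^2) + α * MCP β lam (Real.sqrt (∑ i, (d i * z i)^2))) :=
  stmt_8_general n d x α β lam hα hβ hβd
end

section
/- Let D = diag(d₁,…,dₙ) with dᵢ > 0, α, β, λ > 0 with β > α·d_max². Then 0 is a global minimizer of F(z) = (1/2)‖z−x‖₂² + α·MCP(‖Dz‖₂; β, λ) if and only if ‖Dx‖₂ ≤ βλ and ‖D⁻¹x‖₂ ≤ αλ. -/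
open Filter Topology

theorem MCP_zero {β lam : ℝ} (h : 0 ≤ β * lam) : MCP β lam 0 = 0 := by
  simp [MCP, h]

theorem MCP_of_abs_le {β lam t : ℝ} (h : |t| ≤ β * lam) :
    MCP β lam t = lam * |t| - t ^ 2 / (2 * β) :=
  if_pos h

theorem mul_abs_sub_sq_div_le_MCP {β : ℝ} (hβ : 0 < β) (lam t : ℝ) :
    lam * |t| - t ^ 2 / (2 * β) ≤ MCP β lam t := by
  rw [MCP]
  split_ifs
  · rfl
  · have key : β * lam ^ 2 / 2 - (lam * |t| - t ^ 2 / (2 * β)) =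
        (|t| - β * lam) ^ 2 / (2 * β) := by
      rw [← sq_abs t]
      field_simp
      ring
    linarith [div_nonneg (sq_nonneg (|t| - β * lam)) (by positivity : (0 : ℝ) ≤ 2 * β)]

theorem nonneg_of_forall_mul_add_mul_sq_nonneg {a b ε : ℝ} (hε : 0 < ε)
    (h : ∀ s, 0 < s → s < ε → 0 ≤ a * s + b * s ^ 2) : 0 ≤ a := by
  have hlim : Tendsto (fun s => a + b * s) (𝓝[>] 0) (𝓝 a) := by
    have : Tendsto (fun s => a + b * s) (𝓝 0) (𝓝 (a + b * 0)) :=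
      ((continuous_const.mul continuous_id).const_add a).tendsto 0
    rw [mul_zero, add_zero] at this
    exact this.mono_left nhdsWithin_le_nhds
  refine ge_of_tendsto hlim ?_
  filter_upwards [Ioo_mem_nhdsGT hε] with s ⟨hs, hsε⟩
  refine nonneg_of_mul_nonneg_right ?_ hs
  linarith [h s hs hsε]

section Objective

variable {ι : Type*} [Fintype ι] {α β lam : ℝ} {d x : ι → ℝ}

noncomputable def mcpObjective (α β lam : ℝ) (d x z : ι → ℝ) : ℝ :=
  (1/2) * (∑ i, (z i - x i)^2) + α * MCP β lam (Real.sqrt (∑ i, (d i * z i)^2))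

theorem mcpObjective_zero (α β lam : ℝ) (d x : ι → ℝ) :
    mcpObjective α β lam d x 0 = (1/2) * (∑ i, (x i)^2) + α * MCP β lam 0 := by
  simp [mcpObjective]

theorem mul_sum_mul_sq_le (hβd : ∀ i, α * d i ^ 2 ≤ β) (z : ι → ℝ) :
    α * ∑ i, (d i * z i) ^ 2 ≤ β * ∑ i, z i ^ 2 := by
  rw [Finset.mul_sum, Finset.mul_sum]
  refine Finset.sum_le_sum fun i _ => ?_
  rw [mul_pow, ← mul_assoc]
  exact mul_le_mul_of_nonneg_right (hβd i) (sq_nonneg _)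

theorem sum_mul_le_sqrt_sum_div_sq_mul_sqrt_sum_mul_sq (hd : ∀ i, d i ≠ 0) (z : ι → ℝ) :
    ∑ i, x i * z i ≤ √(∑ i, (x i / d i) ^ 2) * √(∑ i, (d i * z i) ^ 2) := by
  have hxz : ∑ i, x i * z i = ∑ i, x i / d i * (d i * z i) :=
    Finset.sum_congr rfl fun i _ => by field_simp [hd i]
  rw [hxz]
  exact Real.sum_mul_le_sqrt_mul_sqrt _ _ _

theorem sqrt_sum_mul_sq_le_of_sqrt_sum_div_sq_le (hd : ∀ i, d i ≠ 0) (hα : 0 < α) (hβ : 0 ≤ β)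
    (hβd : ∀ i, α * d i ^ 2 ≤ β) (hx : √(∑ i, (x i / d i) ^ 2) ≤ α * lam) :
    √(∑ i, (d i * x i) ^ 2) ≤ β * lam := by
  have hsq : ∑ i, (d i * x i) ^ 2 ≤ (β / α) ^ 2 * ∑ i, (x i / d i) ^ 2 := by
    rw [Finset.mul_sum]
    refine Finset.sum_le_sum fun i _ => ?_
    have hdi : d i ^ 2 ≤ β / α := by rw [le_div_iff₀ hα, mul_comm]; exact hβd i
    have hxi : (d i * x i) ^ 2 = (d i ^ 2) ^ 2 * (x i / d i) ^ 2 := by field_simp [hd i]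
    rw [hxi]
    gcongr
  calc √(∑ i, (d i * x i) ^ 2) ≤ √((β / α) ^ 2 * ∑ i, (x i / d i) ^ 2) := Real.sqrt_le_sqrt hsq
    _ = β / α * √(∑ i, (x i / d i) ^ 2) := by
      rw [Real.sqrt_mul' _ (by positivity), Real.sqrt_sq (by positivity)]
    _ ≤ β / α * (α * lam) := by gcongr
    _ = β * lam := by field_simp

theorem mcpObjective_zero_le (hd : ∀ i, d i ≠ 0) (hα : 0 ≤ α) (hβ : 0 < β) (hlam : 0 ≤ lam)
    (hβd : ∀ i, α * d i ^ 2 ≤ β) (hx : √(∑ i, (x i / d i) ^ 2) ≤ α * lam) (z : ι → ℝ) :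
    mcpObjective α β lam d x 0 ≤ mcpObjective α β lam d x z := by
  rw [mcpObjective_zero, MCP_zero (by positivity), mcpObjective]
  set t := √(∑ i, (d i * z i) ^ 2)
  have ht : 0 ≤ t := Real.sqrt_nonneg _
  have hquad : α * t ^ 2 ≤ β * ∑ i, z i ^ 2 := by
    rw [Real.sq_sqrt (by positivity)]
    exact mul_sum_mul_sq_le hβd z
  have hinner : ∑ i, x i * z i ≤ α * lam * t :=
    (sum_mul_le_sqrt_sum_div_sq_mul_sqrt_sum_mul_sq hd z).trans
      (mul_le_mul_of_nonneg_right hx ht)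
  have hdist : ∑ i, (z i - x i) ^ 2 = ∑ i, z i ^ 2 - 2 * ∑ i, x i * z i + ∑ i, x i ^ 2 := by
    rw [Finset.mul_sum, ← Finset.sum_sub_distrib, ← Finset.sum_add_distrib]
    exact Finset.sum_congr rfl fun i _ => by ring
  have hpen : α * lam * t - α * t ^ 2 / (2 * β) ≤ α * MCP β lam t := by
    have := mul_abs_sub_sq_div_le_MCP hβ lam t
    rw [abs_of_nonneg ht] at this
    calc α * lam * t - α * t ^ 2 / (2 * β) = α * (lam * t - t ^ 2 / (2 * β)) := by ring
      _ ≤ α * MCP β lam t := mul_le_mul_of_nonneg_left this hα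
  have hquad' : α * t ^ 2 / (2 * β) ≤ (∑ i, z i ^ 2) / 2 := by
    rw [div_le_div_iff₀ (by positivity) two_pos]
    nlinarith
  rw [hdist]
  linarith

theorem sqrt_sum_div_sq_le_of_forall_mcpObjective_zero_le (hd : ∀ i, d i ≠ 0) (hα : 0 < α)
    (hβ : 0 < β) (hlam : 0 < lam)
    (hmin : ∀ z, mcpObjective α β lam d x 0 ≤ mcpObjective α β lam d x z) :
    √(∑ i, (x i / d i) ^ 2) ≤ α * lam := by
  set u := √(∑ i, (x i / d i) ^ 2)
  set W := ∑ i, (x i / d i ^ 2) ^ 2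
  have hu : 0 ≤ u := Real.sqrt_nonneg _
  have hu2 : u ^ 2 = ∑ i, (x i / d i) ^ 2 := Real.sq_sqrt (by positivity)
  have hray : ∀ s, 0 < s → s < β * lam / (u + 1) →
      0 ≤ (α * lam * u - u ^ 2) * s + (W / 2 - α * u ^ 2 / (2 * β)) * s ^ 2 := by
    intro s hs hsε
    have hsu : s * u ≤ β * lam := by
      rw [lt_div_iff₀ (by positivity)] at hsε
      nlinarith
    have hnorm : √(∑ i, (d i * (s * (x i / d i ^ 2))) ^ 2) = s * u := by
      rw [← Real.sqrt_sq (by positivity : 0 ≤ s * u), mul_pow, hu2, Finset.mul_sum]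
      congr 1
      exact Finset.sum_congr rfl fun i _ => by field_simp [hd i]
    have hdist : ∑ i, (s * (x i / d i ^ 2) - x i) ^ 2 =
        s ^ 2 * W - 2 * s * u ^ 2 + ∑ i, x i ^ 2 := by
      rw [hu2, Finset.mul_sum, Finset.mul_sum, ← Finset.sum_sub_distrib,
        ← Finset.sum_add_distrib]
      exact Finset.sum_congr rfl fun i _ => by field_simp [hd i]; ring
    have h := hmin fun i => s * (x i / d i ^ 2)
    rw [mcpObjective_zero, MCP_zero (by positivity), mcpObjective, hnorm, hdist,
      MCP_of_abs_le (by rwa [abs_of_nonneg (by positivity)]), abs_of_nonneg (by positivity)] at h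
    have key : (α * lam * u - u ^ 2) * s + (W / 2 - α * u ^ 2 / (2 * β)) * s ^ 2 =
        1 / 2 * (s ^ 2 * W - 2 * s * u ^ 2 + ∑ i, x i ^ 2) +
          α * (lam * (s * u) - (s * u) ^ 2 / (2 * β)) - (1 / 2 * ∑ i, x i ^ 2 + α * 0) := by
      ring
    linarith
  have hfirst := nonneg_of_forall_mul_add_mul_sq_nonneg (by positivity) hray
  by_contra! hlt
  have hαlam : 0 < α * lam := by positivity
  nlinarith [mul_pos (sub_pos.2 hlt) (hαlam.trans hlt)]

end Objective

/-- `0` is a global minimizer of `F(z) = (1/2)‖z−x‖₂² + α·MCP(‖Dz‖₂; β, λ)` if and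
only if `‖Dx‖₂ ≤ βλ` and `‖D⁻¹x‖₂ ≤ αλ`, assuming `β > α·d_max²`. -/
theorem stmt_9 (n : ℕ) (d x : Fin n → ℝ) (hd : ∀ i, 0 < d i) (α β lam : ℝ)
    (hα : 0 < α) (hβ : 1 < β) (hlam : 0 < lam)
    (hβd : ∀ i, α * (d i)^2 < β) :
    (∀ z : Fin n → ℝ,
        (1/2) * (∑ i, (x i)^2) + α * MCP β lam 0 ≤
        (1/2) * (∑ i, (z i - x i)^2) + α * MCP β lam (Real.sqrt (∑ i, (d i * z i)^2))) ↔
      (Real.sqrt (∑ i, (d i * x i)^2) ≤ β * lam ∧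
       Real.sqrt (∑ i, (x i / d i)^2) ≤ α * lam) := by
  have hβ0 : 0 < β := zero_lt_one.trans hβ
  have hd0 : ∀ i, d i ≠ 0 := fun i => (hd i).ne'
  have hβd' : ∀ i, α * d i ^ 2 ≤ β := fun i => (hβd i).le
  rw [← mcpObjective_zero α β lam d x]
  change (∀ z, mcpObjective α β lam d x 0 ≤ mcpObjective α β lam d x z) ↔ _
  constructor
  · intro hmin
    have hx := sqrt_sum_div_sq_le_of_forall_mcpObjective_zero_le hd0 hα hβ0 hlam hmin
    exact ⟨sqrt_sum_mul_sq_le_of_sqrt_sum_div_sq_le hd0 hα hβ0.le hβd' hx, hx⟩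
  · rintro ⟨-, hx⟩
    exact mcpObjective_zero_le hd0 hα.le hβ0 hlam.le hβd' hx
end

section
/- Weighted proximal operator of MCP/ℓ₂: Let D = diag(d₁,…,dₙ) with dᵢ > 0 and d_min = minᵢ dᵢ, and α, β, λ > 0 with α < βd_min. Let h(x) = MCP(‖x‖₂; β, λ). Then: (i) if ‖x‖₂ > βλ, prox_{αh}^D(x) = x; (ii) if ‖x‖₂ ≤ βλ and ‖Dx‖₂ ≤ αλ, prox_{αh}^D(x) = 0; (iii) if ‖x‖₂ ≤ βλ and ‖Dx‖₂ > αλ, then [prox_{αh}^D(x)]ᵢ = dᵢβθ*xᵢ/((dᵢβ − α)θ* + αβλ), where θ* > 0 is the unique positive solution of β²Σᵢ [dᵢxᵢ/((dᵢβ − α)θ* + αβλ)]² = 1. -/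
private lemma mcp_ge {β lam t : ℝ} (hβ : 0 < β) (ht : 0 ≤ t) :
    lam * t - t^2/(2*β) ≤ MCP β lam t := by
  unfold MCP
  rw [abs_of_nonneg ht]
  split_ifs with h
  · exact le_rfl
  · push_neg at h
    have hid : β*lam^2/2 - (lam*t - t^2/(2*β)) = (t - β*lam)^2/(2*β) := by
      field_simp; ring
    have h0 : (0:ℝ) ≤ (t - β*lam)^2/(2*β) := by positivity
    linarith

private lemma mcp_eq {β lam t : ℝ} (ht : 0 ≤ t) (h : t ≤ β*lam) :
    MCP β lam t = lam * t - t^2/(2*β) := by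
  unfold MCP; rw [abs_of_nonneg ht, if_pos h]

private lemma sum_expand {n : ℕ} (d x z : Fin n → ℝ) :
    (∑ i, d i * (z i - x i)^2)
      = (∑ i, d i * (z i)^2) - 2*(∑ i, z i * (d i * x i)) + ∑ i, d i * (x i)^2 := by
  rw [Finset.mul_sum, ← Finset.sum_sub_distrib, ← Finset.sum_add_distrib]
  exact Finset.sum_congr rfl fun i _ => by ring

set_option maxHeartbeats 4000000 in
/-- Weighted proximal operator of MCP/ℓ₂: if `p` is the unique minimizer of
`z ↦ (1/2)⟨z−x, D(z−x)⟩ + α·MCP(‖z‖₂; β, λ)` with `α < βd_min`, then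
(i) `p = x` when `‖x‖₂ > βλ`; (ii) `p = 0` when `‖x‖₂ ≤ βλ` and `‖Dx‖₂ ≤ αλ`;
(iii) when `‖x‖₂ ≤ βλ` and `‖Dx‖₂ > αλ`, `pᵢ = dᵢβθ*xᵢ/((dᵢβ − α)θ* + αβλ)` where
`θ* > 0` is the unique positive solution of `β²Σᵢ [dᵢxᵢ/((dᵢβ − α)θ* + αβλ)]² = 1`. -/
theorem stmt_12 (n : ℕ) (d x p : Fin n → ℝ) (hd : ∀ i, 0 < d i) (α β lam : ℝ)
    (hα : 0 < α) (hβ : 1 < β) (hlam : 0 < lam)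
    (hαβ : ∀ i, α < β * d i)
    (hp : ∀ z : Fin n → ℝ, z ≠ p →
      (1/2) * (∑ i, d i * (p i - x i)^2) + α * MCP β lam (Real.sqrt (∑ i, (p i)^2)) <
      (1/2) * (∑ i, d i * (z i - x i)^2) + α * MCP β lam (Real.sqrt (∑ i, (z i)^2))) :
    (β * lam < Real.sqrt (∑ i, (x i)^2) → p = x) ∧
    (Real.sqrt (∑ i, (x i)^2) ≤ β * lam ∧ Real.sqrt (∑ i, (d i * x i)^2) ≤ α * lam →
      p = 0) ∧
    (Real.sqrt (∑ i, (x i)^2) ≤ β * lam ∧ α * lam < Real.sqrt (∑ i, (d i * x i)^2) →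
      ∃ θ : ℝ, (0 < θ ∧
          β^2 * ∑ i, (d i * x i / ((d i * β - α) * θ + α * β * lam))^2 = 1) ∧
        (∀ θ' : ℝ, (0 < θ' ∧
          β^2 * ∑ i, (d i * x i / ((d i * β - α) * θ' + α * β * lam))^2 = 1) → θ' = θ) ∧
        ∀ i, p i = d i * β * θ * x i / ((d i * β - α) * θ + α * β * lam)) := by
  have hβ0 : (0:ℝ) < β := by linarith
  have hdiv : ∀ i, α/β ≤ d i := by
    intro i
    rw [div_le_iff₀ hβ0]
    have := hαβ i
    nlinarith
  refine ⟨?_, ?_, ?_⟩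
  · -- Case (i)
    intro hx
    by_contra hne
    have hlt := hp x (fun h => hne h.symm)
    have hFx : (1/2) * (∑ i, d i * (x i - x i)^2)
        + α * MCP β lam (Real.sqrt (∑ i, (x i)^2)) = α*(β*lam^2/2) := by
      have h0 : (∑ i, d i * (x i - x i)^2) = 0 := by simp
      have hm : MCP β lam (Real.sqrt (∑ i, (x i)^2)) = β*lam^2/2 := by
        unfold MCP
        rw [abs_of_nonneg (Real.sqrt_nonneg _), if_neg (not_le.2 hx)]
      rw [h0, hm]; ring
    have hlow : α*(β*lam^2/2) ≤ (1/2) * (∑ i, d i * (p i - x i)^2)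
        + α * MCP β lam (Real.sqrt (∑ i, (p i)^2)) := by
      set t := Real.sqrt (∑ i, (p i)^2) with htdef
      set s := Real.sqrt (∑ i, (x i)^2) with hsdef
      have ht0 : 0 ≤ t := Real.sqrt_nonneg _
      have ht2 : t^2 = ∑ i, (p i)^2 := Real.sq_sqrt (by positivity)
      have hs2 : s^2 = ∑ i, (x i)^2 := Real.sq_sqrt (by positivity)
      by_cases hcase : t ≤ β*lam
      · have hm : MCP β lam t = lam*t - t^2/(2*β) := mcp_eq ht0 hcase
        have h1 : (α/β) * (∑ i, (p i - x i)^2) ≤ ∑ i, d i*(p i - x i)^2 := by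
          rw [Finset.mul_sum]
          refine Finset.sum_le_sum fun i _ => ?_
          have := hdiv i
          nlinarith [sq_nonneg (p i - x i)]
        have hcs : (∑ i, p i * x i) ≤ t * s := Real.sum_mul_le_sqrt_mul_sqrt _ _ _
        have hexp : (∑ i, (p i - x i)^2)
            = (∑ i, (p i)^2) - 2*(∑ i, p i * x i) + ∑ i, (x i)^2 := by
          rw [Finset.mul_sum, ← Finset.sum_sub_distrib, ← Finset.sum_add_distrib]
          exact Finset.sum_congr rfl fun i _ => by ring
        have h2 : (s - t)^2 ≤ ∑ i, (p i - x i)^2 := by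
          rw [hexp, ← ht2, ← hs2]; nlinarith [hcs]
        have h3 : (β*lam - t)^2 ≤ (s - t)^2 := by nlinarith
        have hid : α*(β*lam^2/2) = (α/(2*β))*(β*lam - t)^2 + α*(lam*t - t^2/(2*β)) := by
          field_simp; ring
        have hfrac : (0:ℝ) ≤ α/(2*β) := by positivity
        have c1 : (α/(2*β))*(β*lam - t)^2 ≤ (α/(2*β))*(∑ i, (p i - x i)^2) :=
          mul_le_mul_of_nonneg_left (le_trans h3 h2) hfrac
        have c2 : (α/(2*β))*(∑ i, (p i - x i)^2) = (1/2)*((α/β)*(∑ i, (p i - x i)^2)) := by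
          ring
        rw [hm, hid]
        linarith
      · have hm : MCP β lam t = β*lam^2/2 := by
          unfold MCP; rw [abs_of_nonneg ht0, if_neg hcase]
        have h0 : (0:ℝ) ≤ ∑ i, d i * (p i - x i)^2 :=
          Finset.sum_nonneg fun i _ => mul_nonneg (hd i).le (sq_nonneg _)
        rw [hm]; linarith
    linarith
  · -- Case (ii)
    rintro ⟨hx, hDx⟩
    by_contra hne
    have hlt := hp 0 (fun h => hne h.symm)
    have hF0 : (1/2) * (∑ i, d i * ((0:Fin n → ℝ) i - x i)^2)
        + α * MCP β lam (Real.sqrt (∑ i, ((0:Fin n → ℝ) i)^2))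
        = (1/2) * (∑ i, d i * (x i)^2) := by
      have h1 : (∑ i, d i * ((0:Fin n → ℝ) i - x i)^2) = ∑ i, d i * (x i)^2 :=
        Finset.sum_congr rfl fun i _ => by simp
      have h2 : (∑ i, ((0:Fin n → ℝ) i)^2) = 0 := by simp
      have h3 : MCP β lam (Real.sqrt 0) = 0 := by
        rw [Real.sqrt_zero]
        unfold MCP
        rw [abs_zero, if_pos (by positivity)]
        ring
      rw [h1, h2, h3]; ring
    have hlow : (1/2) * (∑ i, d i * (x i)^2) ≤ (1/2) * (∑ i, d i * (p i - x i)^2)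
        + α * MCP β lam (Real.sqrt (∑ i, (p i)^2)) := by
      set t := Real.sqrt (∑ i, (p i)^2) with htdef
      have ht0 : 0 ≤ t := Real.sqrt_nonneg _
      have ht2 : t^2 = ∑ i, (p i)^2 := Real.sq_sqrt (by positivity)
      have hm : lam*t - t^2/(2*β) ≤ MCP β lam t := mcp_ge hβ0 ht0
      have hm' : α*(lam*t - t^2/(2*β)) ≤ α * MCP β lam t :=
        mul_le_mul_of_nonneg_left hm hα.le
      have hcs : (∑ i, p i * (d i * x i)) ≤ t * Real.sqrt (∑ i, (d i * x i)^2) :=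
        Real.sum_mul_le_sqrt_mul_sqrt _ _ _
      have hcs2 : (∑ i, p i * (d i * x i)) ≤ t * (α*lam) :=
        le_trans hcs (mul_le_mul_of_nonneg_left hDx ht0)
      have h1 : (α/β) * (∑ i, (p i)^2) ≤ ∑ i, d i*(p i)^2 := by
        rw [Finset.mul_sum]
        refine Finset.sum_le_sum fun i _ => ?_
        have := hdiv i
        nlinarith [sq_nonneg (p i)]
      have hexp := sum_expand d x p
      have he1 : α*(t^2/(2*β)) = (1/2)*((α/β)*t^2) := by ring
      rw [← ht2] at h1
      linarith
    linarith
  · -- Case (iii)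
    rintro ⟨hx, hDx⟩
    set g : ℝ → ℝ := fun θ => β^2 * ∑ i, (d i * x i / ((d i * β - α) * θ + α * β * lam))^2
      with hgdef
    have hdpos : ∀ i, 0 < d i * β - α := by
      intro i
      have := hαβ i
      nlinarith
    have hden : ∀ i, ∀ θ : ℝ, 0 ≤ θ → 0 < (d i * β - α) * θ + α * β * lam := by
      intro i θ hθ
      have h1 := hdpos i
      nlinarith [mul_pos hα (mul_pos hβ0 hlam)]
    have hsum : (α*lam)^2 < ∑ i, (d i * x i)^2 := by
      have h := Real.sq_sqrt (show (0:ℝ) ≤ ∑ i, (d i * x i)^2 by positivity)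
      nlinarith [mul_pos hα hlam, Real.sqrt_nonneg (∑ i, (d i * x i)^2)]
    obtain ⟨i₀, hi₀⟩ : ∃ i, d i * x i ≠ 0 := by
      by_contra h
      push_neg at h
      have h0 : (∑ i, (d i * x i)^2) = 0 :=
        Finset.sum_eq_zero fun i _ => by rw [h i]; ring
      nlinarith [mul_pos hα hlam]
    -- strict monotonicity
    have hmono : ∀ a b : ℝ, 0 ≤ a → a < b → g b < g a := by
      intro a b ha hab
      have hb : (0:ℝ) ≤ b := le_trans ha hab.le
      rw [hgdef]
      simp only
      refine mul_lt_mul_of_pos_left ?_ (by positivity)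
      refine Finset.sum_lt_sum (fun i _ => ?_) ⟨i₀, Finset.mem_univ _, ?_⟩
      · have hDa := hden i a ha
        have hDb := hden i b hb
        have hle : (d i * β - α) * a + α * β * lam ≤ (d i * β - α) * b + α * β * lam := by
          nlinarith [hdpos i]
        rw [div_pow, div_pow]
        exact div_le_div_of_nonneg_left (sq_nonneg _) (by positivity) (by nlinarith)
      · have hDa := hden i₀ a ha
        have hDb := hden i₀ b hb
        have hlt : (d i₀ * β - α) * a + α * β * lam < (d i₀ * β - α) * b + α * β * lam := by
          nlinarith [hdpos i₀]
        rw [div_pow, div_pow]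
        exact div_lt_div_of_pos_left (by positivity) (by positivity) (by nlinarith)
    -- continuity
    have hcont : ContinuousOn g (Set.Icc 0 (β*lam)) := by
      rw [hgdef]
      apply ContinuousOn.mul continuousOn_const
      apply continuousOn_finset_sum
      intro i _
      apply ContinuousOn.pow
      apply ContinuousOn.div continuousOn_const
      · fun_prop
      · intro θ hθ
        exact ne_of_gt (hden i θ hθ.1)
    -- boundary values
    have hg0 : 1 < g 0 := by
      have hval : g 0 = (∑ i, (d i * x i)^2) / (α*lam)^2 := by
        rw [hgdef]
        simp only
        rw [Finset.mul_sum, Finset.sum_div]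
        refine Finset.sum_congr rfl fun i _ => ?_
        have h1 : α ≠ 0 := ne_of_gt hα
        have h2 : β ≠ 0 := ne_of_gt hβ0
        have h3 : lam ≠ 0 := ne_of_gt hlam
        field_simp
        ring
      rw [hval, lt_div_iff₀ (by positivity)]
      linarith
    have hgbl : g (β*lam) ≤ 1 := by
      have hval : g (β*lam) = (∑ i, (x i)^2) / (β*lam)^2 := by
        rw [hgdef]
        simp only
        rw [Finset.mul_sum, Finset.sum_div]
        refine Finset.sum_congr rfl fun i _ => ?_
        have h1 : (d i * β - α)*(β*lam) + α*β*lam = d i * β^2 * lam := by ring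
        rw [h1]
        have h2 : d i ≠ 0 := ne_of_gt (hd i)
        have h3 : β ≠ 0 := ne_of_gt hβ0
        have h4 : lam ≠ 0 := ne_of_gt hlam
        field_simp
      rw [hval, div_le_one (by positivity)]
      have h := Real.sq_sqrt (show (0:ℝ) ≤ ∑ i, (x i)^2 by positivity)
      nlinarith [Real.sqrt_nonneg (∑ i, (x i)^2)]
    -- IVT
    obtain ⟨θ, hθmem, hθeq⟩ :=
      intermediate_value_Icc' (by positivity : (0:ℝ) ≤ β*lam) hcont ⟨hgbl, hg0.le⟩
    have hθpos : 0 < θ := by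
      rcases lt_or_eq_of_le hθmem.1 with h | h
      · exact h
      · exfalso; rw [← h] at hθeq; linarith
    have hθbl : θ ≤ β*lam := hθmem.2
    have hθne : θ ≠ 0 := ne_of_gt hθpos
    have hgθ : β^2 * ∑ i, (d i * x i / ((d i * β - α) * θ + α * β * lam))^2 = 1 := hθeq
    have hDθ : ∀ i, 0 < (d i * β - α) * θ + α * β * lam := fun i => hden i θ hθpos.le
    set q : Fin n → ℝ := fun i => d i * β * θ * x i / ((d i * β - α) * θ + α * β * lam)
      with hqdef
    have hq2 : (∑ i, (q i)^2) = θ^2 := by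
      have h1 : (∑ i, (q i)^2)
          = θ^2 * (β^2 * ∑ i, (d i * x i / ((d i * β - α) * θ + α * β * lam))^2) := by
        rw [Finset.mul_sum, Finset.mul_sum]
        refine Finset.sum_congr rfl fun i _ => ?_
        rw [hqdef]
        simp only
        have hD := ne_of_gt (hDθ i)
        field_simp
      rw [h1, hgθ, mul_one]
    have hNq : Real.sqrt (∑ i, (q i)^2) = θ := by
      rw [hq2]; exact Real.sqrt_sq hθpos.le
    have hstat : ∀ i, d i * x i = (d i - α/β) * q i + (α*lam/θ) * q i := by
      intro i
      rw [hqdef]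
      simp only
      have hD := ne_of_gt (hDθ i)
      have h2 : β ≠ 0 := ne_of_gt hβ0
      field_simp
    -- q is the global minimizer
    have hmin : ∀ z : Fin n → ℝ,
        (1/2) * (∑ i, d i * (q i - x i)^2) + α * MCP β lam (Real.sqrt (∑ i, (q i)^2))
        ≤ (1/2) * (∑ i, d i * (z i - x i)^2) + α * MCP β lam (Real.sqrt (∑ i, (z i)^2)) := by
      intro z
      set t := Real.sqrt (∑ i, (z i)^2) with htdef
      have ht0 : 0 ≤ t := Real.sqrt_nonneg _
      have ht2 : t^2 = ∑ i, (z i)^2 := Real.sq_sqrt (by positivity)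
      have hmz : α*(lam*t - t^2/(2*β)) ≤ α * MCP β lam t :=
        mul_le_mul_of_nonneg_left (mcp_ge hβ0 ht0) hα.le
      have hmq : MCP β lam θ = lam*θ - θ^2/(2*β) := mcp_eq hθpos.le hθbl
      have hterm : ∀ i,
          (1/2)*(d i)*(q i - x i)^2 - (α/(2*β))*(q i)^2
            - (α*lam/θ)*(q i * z i) + (α*lam/θ)*(q i)^2
          ≤ (1/2)*(d i)*(z i - x i)^2 - (α/(2*β))*(z i)^2 := by
        intro i
        have hs := hstat i
        have hdi : 0 ≤ d i - α/β := by linarith [hdiv i]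
        obtain ⟨Q, hQ⟩ : ∃ Q, q i = Q := ⟨_, rfl⟩
        rw [hQ] at hs ⊢
        have hbr : (d i * x i) - ((d i - α/β) + α*lam/θ)*Q = 0 := by
          rw [hs]; ring
        have key : (1/2)*(d i)*(z i - x i)^2 - (α/(2*β))*(z i)^2
            - ((1/2)*(d i)*(Q - x i)^2 - (α/(2*β))*Q^2
              - (α*lam/θ)*(Q * z i) + (α*lam/θ)*Q^2)
            = (1/2)*(d i - α/β)*(z i - Q)^2
              - (z i - Q)*((d i * x i) - ((d i - α/β) + α*lam/θ)*Q) := by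
          field_simp
          ring
        have h0 : (z i - Q)*((d i * x i) - ((d i - α/β) + α*lam/θ)*Q) = 0 := by
          rw [hbr, mul_zero]
        nlinarith [mul_nonneg hdi (sq_nonneg (z i - Q))]
      have hsumineq := Finset.sum_le_sum (fun i (_ : i ∈ Finset.univ) => hterm i)
      have hL : ∑ i, ((1/2)*(d i)*(q i - x i)^2 - (α/(2*β))*(q i)^2
            - (α*lam/θ)*(q i * z i) + (α*lam/θ)*(q i)^2)
          = (1/2)*(∑ i, d i * (q i - x i)^2) - (α/(2*β))*(∑ i, (q i)^2)
            - (α*lam/θ)*(∑ i, q i * z i) + (α*lam/θ)*(∑ i, (q i)^2) := by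
        rw [Finset.mul_sum, Finset.mul_sum, Finset.mul_sum, Finset.mul_sum,
          ← Finset.sum_sub_distrib, ← Finset.sum_sub_distrib, ← Finset.sum_add_distrib]
        exact Finset.sum_congr rfl fun i _ => by ring
      have hR : ∑ i, ((1/2)*(d i)*(z i - x i)^2 - (α/(2*β))*(z i)^2)
          = (1/2)*(∑ i, d i * (z i - x i)^2) - (α/(2*β))*(∑ i, (z i)^2) := by
        rw [Finset.mul_sum, Finset.mul_sum, ← Finset.sum_sub_distrib]
        exact Finset.sum_congr rfl fun i _ => by ring
      rw [hL, hR] at hsumineq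
      have hcs : (∑ i, q i * z i) ≤ θ * t := by
        have h := Real.sum_mul_le_sqrt_mul_sqrt Finset.univ q z
        rwa [hNq] at h
      have hfac : (0:ℝ) ≤ α*lam/θ := by positivity
      have e1 : (α*lam/θ)*(∑ i, q i * z i) ≤ (α*lam/θ)*(θ*t) :=
        mul_le_mul_of_nonneg_left hcs hfac
      have e2 : (α*lam/θ)*(θ*t) = α*lam*t := by field_simp
      have e3 : (α*lam/θ)*θ^2 = α*lam*θ := by field_simp
      have e4 : α*(lam*θ - θ^2/(2*β)) = α*lam*θ - (α/(2*β))*θ^2 := by ring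
      have e5 : α*(lam*t - t^2/(2*β)) = α*lam*t - (α/(2*β))*t^2 := by ring
      rw [hNq, hmq]
      rw [hq2, ← ht2] at hsumineq
      linarith
    have hpq : p = q := by
      by_contra hne
      have h1 := hp q (fun h => hne h.symm)
      have h2 := hmin p
      linarith
    refine ⟨θ, ⟨hθpos, hgθ⟩, ?_, ?_⟩
    · rintro θ' ⟨hθ'pos, hθ'eq⟩
      have hgθ' : g θ' = 1 := hθ'eq
      by_contra hne
      rcases lt_or_gt_of_ne hne with h | h
      · have := hmono θ' θ hθ'pos.le h
        rw [hgθ', show g θ = 1 from hθeq] at this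
        exact lt_irrefl _ this
      · have := hmono θ θ' hθpos.le h
        rw [hgθ', show g θ = 1 from hθeq] at this
        exact lt_irrefl _ this
    · intro i
      rw [hpq, hqdef]
end

section
/- Existence and uniqueness of θ* for MCP/ℓ₂: Let D = diag(d₁,…,dₙ) with dᵢ > 0, α, β, λ > 0 with β > α·d_max², and x ∈ ℝⁿ. The function G(θ) = β²Σᵢ [dᵢxᵢ/(θ(β − αdᵢ²) + αβλdᵢ²)]² is convex and monotonically decreasing on ℝ₊, and there exists a unique θ* ∈ (0, βλ] with G(θ*) = 1 if and only if ‖D⁻¹x‖₂ > αλ and ‖Dx‖₂ ≤ βλ. -/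
/-!
Each summand `(kᵢ / (θ cᵢ + aᵢ))²` with `cᵢ, aᵢ > 0` is `y ↦ y⁻²` composed with an increasing
affine map that stays positive on `θ ≥ 0`, hence convex and antitone there, and strictly
decreasing when `kᵢ ≠ 0`. The crossing of level `1` on `(0, βλ]` is then governed by the two
endpoint values `G(0) = ‖D⁻¹x‖² / (αλ)²` and `G(βλ) = ‖Dx‖² / (βλ)²`, the latter because the
denominator collapses to `β²λ` at `θ = βλ`. (For `x = 0` both sides of the equivalence fail.)
-/

open Set

section Summand

variable {c a : ℝ}

lemma convexOn_div_mul_add_sq (k : ℝ) (hc : 0 ≤ c) (ha : 0 < a) :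
    ConvexOn ℝ (Ici 0) fun θ : ℝ => (k / (θ * c + a)) ^ 2 := by
  let g : ℝ →ᵃ[ℝ] ℝ := c • AffineMap.id ℝ ℝ + AffineMap.const ℝ ℝ a
  have hg : ∀ θ, g θ = θ * c + a := fun θ => by simp [g, mul_comm]
  have hmaps : Ici 0 ⊆ g ⁻¹' Ioi 0 := fun θ (hθ : 0 ≤ θ) => by
    simp only [mem_preimage, hg, mem_Ioi]; positivity
  refine (((convexOn_zpow (-2)).comp_affineMap g).subset hmaps (convex_Ici 0)).smul
    (sq_nonneg k) |>.congr fun θ _ => ?_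
  simp [hg, div_eq_mul_inv, mul_pow]

lemma antitoneOn_div_mul_add_sq (k : ℝ) (hc : 0 ≤ c) (ha : 0 < a) :
    AntitoneOn (fun θ : ℝ => (k / (θ * c + a)) ^ 2) (Ici 0) := by
  intro θ₁ (h₁ : 0 ≤ θ₁) θ₂ _ h₁₂
  dsimp only
  rw [div_pow, div_pow]
  gcongr

lemma strictAntiOn_div_mul_add_sq {k : ℝ} (hk : k ≠ 0) (hc : 0 < c) (ha : 0 < a) :
    StrictAntiOn (fun θ : ℝ => (k / (θ * c + a)) ^ 2) (Ici 0) := by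
  intro θ₁ (h₁ : 0 ≤ θ₁) θ₂ _ h₁₂
  dsimp only
  rw [div_pow, div_pow]
  gcongr

lemma continuousOn_div_mul_add_sq (k : ℝ) (hc : 0 ≤ c) (ha : 0 < a) :
    ContinuousOn (fun θ : ℝ => (k / (θ * c + a)) ^ 2) (Ici 0) :=
  ((continuousOn_const.div (by fun_prop)) fun θ (hθ : 0 ≤ θ) => by positivity).pow 2

end Summand

section Sum

variable {ι : Type*} [Fintype ι] (k : ι → ℝ) {c a : ι → ℝ}

lemma convexOn_sum_div_mul_add_sq (hc : ∀ i, 0 ≤ c i) (ha : ∀ i, 0 < a i) :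
    ConvexOn ℝ (Ici 0) fun θ : ℝ => ∑ i, (k i / (θ * c i + a i)) ^ 2 := by
  have := Finset.sum_induction (s := Finset.univ) (fun i θ => (k i / (θ * c i + a i)) ^ 2)
    (ConvexOn ℝ (Ici 0)) (fun _ _ => ConvexOn.add) (convexOn_const 0 (convex_Ici 0))
    fun i _ => convexOn_div_mul_add_sq (k i) (hc i) (ha i)
  rwa [Finset.sum_fn] at this

lemma antitoneOn_sum_div_mul_add_sq (hc : ∀ i, 0 ≤ c i) (ha : ∀ i, 0 < a i) :
    AntitoneOn (fun θ : ℝ => ∑ i, (k i / (θ * c i + a i)) ^ 2) (Ici 0) :=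
  fun _ h₁ _ h₂ h₁₂ => Finset.sum_le_sum fun i _ =>
    antitoneOn_div_mul_add_sq (k i) (hc i) (ha i) h₁ h₂ h₁₂

lemma strictAntiOn_sum_div_mul_add_sq {j : ι} (hk : k j ≠ 0) (hc : ∀ i, 0 < c i)
    (ha : ∀ i, 0 < a i) :
    StrictAntiOn (fun θ : ℝ => ∑ i, (k i / (θ * c i + a i)) ^ 2) (Ici 0) :=
  fun _ h₁ _ h₂ h₁₂ => Finset.sum_lt_sum
    (fun i _ => antitoneOn_div_mul_add_sq (k i) (hc i).le (ha i) h₁ h₂ h₁₂.le)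
    ⟨j, Finset.mem_univ j, strictAntiOn_div_mul_add_sq hk (hc j) (ha j) h₁ h₂ h₁₂⟩

lemma continuousOn_sum_div_mul_add_sq (hc : ∀ i, 0 ≤ c i) (ha : ∀ i, 0 < a i) :
    ContinuousOn (fun θ : ℝ => ∑ i, (k i / (θ * c i + a i)) ^ 2) (Ici 0) :=
  continuousOn_finsetSum _ fun i _ => continuousOn_div_mul_add_sq (k i) (hc i) (ha i)

end Sum

lemma StrictAntiOn.existsUnique_mem_Ioc_eq_iff {f : ℝ → ℝ} {p q y : ℝ} (hpq : p ≤ q)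
    (hcont : ContinuousOn f (Icc p q)) (hf : StrictAntiOn f (Icc p q)) :
    (∃! θ, θ ∈ Ioc p q ∧ f θ = y) ↔ f q ≤ y ∧ y < f p := by
  have hp : p ∈ Icc p q := left_mem_Icc.2 hpq
  have hq : q ∈ Icc p q := right_mem_Icc.2 hpq
  constructor
  · rintro ⟨θ, ⟨hθ, rfl⟩, -⟩
    exact ⟨hf.antitoneOn (Ioc_subset_Icc_self hθ) hq hθ.2,
      hf hp (Ioc_subset_Icc_self hθ) hθ.1⟩
  · rintro ⟨hqy, hyp⟩
    obtain ⟨θ, hθ, rfl⟩ := intermediate_value_Icc' hpq hcont ⟨hqy, hyp.le⟩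
    have hθp : p < θ := hθ.1.lt_of_ne (by rintro rfl; exact hyp.false)
    refine ⟨θ, ⟨⟨hθp, hθ.2⟩, rfl⟩, fun θ' ⟨hθ', heq⟩ => ?_⟩
    exact hf.injOn (Ioc_subset_Icc_self hθ') hθ heq

lemma mcp_coeffs_pos {δ α β lam : ℝ} (hδ : 0 < δ) (hα : 0 < α) (hlam : 0 < lam)
    (hβ : α * δ ^ 2 < β) : 0 < β - α * δ ^ 2 ∧ 0 < α * β * lam * δ ^ 2 := by
  have : 0 < β := (by positivity : 0 < α * δ ^ 2).trans hβ
  exact ⟨sub_pos.2 hβ, by positivity⟩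

section MCP

variable {ι : Type*} [Fintype ι] (d x : ι → ℝ) (α β lam : ℝ)

noncomputable def mcpG (θ : ℝ) : ℝ :=
  β ^ 2 * ∑ i, (d i * x i / (θ * (β - α * d i ^ 2) + α * β * lam * d i ^ 2)) ^ 2

lemma mcpG_eq_sum : mcpG d x α β lam =
    fun θ => ∑ i, (β * (d i * x i) / (θ * (β - α * d i ^ 2) + α * β * lam * d i ^ 2)) ^ 2 := by
  funext θ
  simp only [mcpG, Finset.mul_sum, ← mul_pow, mul_div_assoc]

variable {d x α β lam}

lemma mcpG_zero (hd : ∀ i, d i ≠ 0) (hβ : β ≠ 0) :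
    mcpG d x α β lam 0 = (∑ i, (x i / d i) ^ 2) / (α * lam) ^ 2 := by
  simp only [mcpG, Finset.mul_sum, Finset.sum_div]
  refine Finset.sum_congr rfl fun i _ => ?_
  have := hd i
  rw [zero_mul, zero_add]
  field_simp

lemma mcpG_mul_self (hβ : β ≠ 0) :
    mcpG d x α β lam (β * lam) = (∑ i, (d i * x i) ^ 2) / (β * lam) ^ 2 := by
  simp only [mcpG, Finset.mul_sum, Finset.sum_div]
  refine Finset.sum_congr rfl fun i _ => ?_
  rw [show β * lam * (β - α * d i ^ 2) + α * β * lam * d i ^ 2 = β ^ 2 * lam by ring]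
  field_simp

lemma mcpG_of_forall_eq_zero (hx : ∀ i, x i = 0) (θ : ℝ) : mcpG d x α β lam θ = 0 := by
  simp [mcpG, hx]

lemma convexOn_mcpG (hd : ∀ i, 0 < d i) (hα : 0 < α) (hlam : 0 < lam)
    (hβd : ∀ i, α * d i ^ 2 < β) : ConvexOn ℝ (Ici 0) (mcpG d x α β lam) := by
  have h := fun i => mcp_coeffs_pos (hd i) hα hlam (hβd i)
  rw [mcpG_eq_sum]
  exact convexOn_sum_div_mul_add_sq _ (fun i => (h i).1.le) fun i => (h i).2

lemma antitoneOn_mcpG (hd : ∀ i, 0 < d i) (hα : 0 < α) (hlam : 0 < lam)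
    (hβd : ∀ i, α * d i ^ 2 < β) : AntitoneOn (mcpG d x α β lam) (Ici 0) := by
  have h := fun i => mcp_coeffs_pos (hd i) hα hlam (hβd i)
  rw [mcpG_eq_sum]
  exact antitoneOn_sum_div_mul_add_sq _ (fun i => (h i).1.le) fun i => (h i).2

lemma continuousOn_mcpG (hd : ∀ i, 0 < d i) (hα : 0 < α) (hlam : 0 < lam)
    (hβd : ∀ i, α * d i ^ 2 < β) : ContinuousOn (mcpG d x α β lam) (Ici 0) := by
  have h := fun i => mcp_coeffs_pos (hd i) hα hlam (hβd i)
  rw [mcpG_eq_sum]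
  exact continuousOn_sum_div_mul_add_sq _ (fun i => (h i).1.le) fun i => (h i).2

lemma strictAntiOn_mcpG (hd : ∀ i, 0 < d i) (hα : 0 < α) (hlam : 0 < lam)
    (hβd : ∀ i, α * d i ^ 2 < β) {j : ι} (hx : x j ≠ 0) :
    StrictAntiOn (mcpG d x α β lam) (Ici 0) := by
  have h := fun i => mcp_coeffs_pos (hd i) hα hlam (hβd i)
  have hdj := hd j
  have hβ : 0 < β := (by positivity : 0 < α * d j ^ 2).trans (hβd j)
  rw [mcpG_eq_sum]
  exact strictAntiOn_sum_div_mul_add_sq _ (by positivity) (fun i => (h i).1) fun i => (h i).2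

end MCP

theorem stmt_13_general (n : ℕ) (d x : Fin n → ℝ) (hd : ∀ i, 0 < d i) (α β lam : ℝ)
    (hα : 0 < α) (hlam : 0 < lam)
    (hβd : ∀ i, α * (d i)^2 < β) :
    ConvexOn ℝ (Set.Ici (0:ℝ))
      (fun θ : ℝ =>
        β^2 * ∑ i, (d i * x i / (θ * (β - α * (d i)^2) + α * β * lam * (d i)^2))^2) ∧
    AntitoneOn
      (fun θ : ℝ =>
        β^2 * ∑ i, (d i * x i / (θ * (β - α * (d i)^2) + α * β * lam * (d i)^2))^2)
      (Set.Ici (0:ℝ)) ∧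
    ((∃! θ : ℝ, θ ∈ Set.Ioc (0:ℝ) (β * lam) ∧
        β^2 * ∑ i, (d i * x i / (θ * (β - α * (d i)^2) + α * β * lam * (d i)^2))^2 = 1) ↔
      (α * lam < Real.sqrt (∑ i, (x i / d i)^2) ∧
       Real.sqrt (∑ i, (d i * x i)^2) ≤ β * lam)) := by
  change ConvexOn ℝ _ (mcpG d x α β lam) ∧ AntitoneOn (mcpG d x α β lam) _ ∧
    ((∃! θ, θ ∈ Ioc 0 (β * lam) ∧ mcpG d x α β lam θ = 1) ↔ _)
  refine ⟨convexOn_mcpG hd hα hlam hβd, antitoneOn_mcpG hd hα hlam hβd, ?_⟩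
  by_cases hx : ∀ i, x i = 0
  · simp [mcpG_of_forall_eq_zero hx, hx, (mul_pos hα hlam).not_gt]
  obtain ⟨j, hj⟩ := not_forall.1 hx
  have hdj := hd j
  have hβ : 0 < β := (by positivity : 0 < α * d j ^ 2).trans (hβd j)
  rw [StrictAntiOn.existsUnique_mem_Ioc_eq_iff (by positivity)
      ((continuousOn_mcpG hd hα hlam hβd).mono Icc_subset_Ici_self)
      ((strictAntiOn_mcpG hd hα hlam hβd hj).mono Icc_subset_Ici_self),
    mcpG_zero (fun i => (hd i).ne') hβ.ne', mcpG_mul_self hβ.ne',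
    div_le_one (by positivity), one_lt_div (by positivity), Real.lt_sqrt (by positivity),
    Real.sqrt_le_left (by positivity), and_comm]

/-- Existence and uniqueness of `θ*` for MCP/ℓ₂: with `β > α·d_max²`, the function
`G(θ) = β²Σᵢ [dᵢxᵢ/(θ(β − αdᵢ²) + αβλdᵢ²)]²` is convex and monotonically
decreasing on `ℝ₊`, and there is a unique `θ* ∈ (0, βλ]` with `G(θ*) = 1` if and
only if `‖D⁻¹x‖₂ > αλ` and `‖Dx‖₂ ≤ βλ`. -/
theorem stmt_13 (n : ℕ) (d x : Fin n → ℝ) (hd : ∀ i, 0 < d i) (α β lam : ℝ)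
    (hα : 0 < α) (hβ : 1 < β) (hlam : 0 < lam)
    (hβd : ∀ i, α * (d i)^2 < β) :
    ConvexOn ℝ (Set.Ici (0:ℝ))
      (fun θ : ℝ =>
        β^2 * ∑ i, (d i * x i / (θ * (β - α * (d i)^2) + α * β * lam * (d i)^2))^2) ∧
    AntitoneOn
      (fun θ : ℝ =>
        β^2 * ∑ i, (d i * x i / (θ * (β - α * (d i)^2) + α * β * lam * (d i)^2))^2)
      (Set.Ici (0:ℝ)) ∧
    ((∃! θ : ℝ, θ ∈ Set.Ioc (0:ℝ) (β * lam) ∧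
        β^2 * ∑ i, (d i * x i / (θ * (β - α * (d i)^2) + α * β * lam * (d i)^2))^2 = 1) ↔
      (α * lam < Real.sqrt (∑ i, (x i / d i)^2) ∧
       Real.sqrt (∑ i, (d i * x i)^2) ≤ β * lam)) :=
  stmt_13_general n d x hd α β lam hα hlam hβd
end

section
/- Approximation error of the weighted proximal operator of MCP/ℓ₂: Let D = diag(d₁,…,dₙ) with dᵢ > 0 and d_min = minᵢ dᵢ, α, β, λ > 0 with α < βd_min, x ∈ ℝⁿ, and let θ* > 0 satisfy β²Σᵢ [dᵢxᵢ/((dᵢβ − α)θ* + αβλ)]² = 1. If θ̃ > 0 satisfies |θ̃ − θ*| ≤ ε, and z̃ᵢ = dᵢβθ̃xᵢ/((dᵢβ − α)θ̃ + αβλ), zᵢ* = dᵢβθ*xᵢ/((dᵢβ − α)θ* + αβλ), then ‖z̃ − z*‖₂ ≤ ε. -/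
/-!
Writing `Pᵢ(θ) = (dᵢβ − α)θ + αβλ`, each coordinate of the error factors as
`z̃ᵢ − zᵢ* = (θ̃ − θ*) · (dᵢβxᵢ / Pᵢ(θ*)) · (αβλ / Pᵢ(θ̃))`. The last factor lies in `(0, 1]`,
and the vector `(dᵢβxᵢ / Pᵢ(θ*))ᵢ` has unit norm by the equation defining `θ*`.
-/

lemma mul_div_add_sub_mul_div_add (p a c s t : ℝ) (hs : a * s + c ≠ 0) (ht : a * t + c ≠ 0) :
    p * t / (a * t + c) - p * s / (a * s + c) = (t - s) * (p / (a * s + c)) * (c / (a * t + c)) := by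
  rw [div_sub_div _ _ ht hs, mul_div_assoc', ← mul_div_assoc, div_mul_eq_mul_div, div_div]
  congr 1 <;> ring

lemma abs_mul_div_add_sub_mul_div_add_le (p a c s t : ℝ) (hc : 0 < c) (hat : 0 ≤ a * t)
    (hs : a * s + c ≠ 0) :
    |p * t / (a * t + c) - p * s / (a * s + c)| ≤ |t - s| * |p / (a * s + c)| := by
  have ht : 0 < a * t + c := by positivity
  have hratio : |c / (a * t + c)| ≤ 1 := by
    rw [abs_of_pos (div_pos hc ht), div_le_one ht]
    linarith
  rw [mul_div_add_sub_mul_div_add p a c s t hs ht.ne', abs_mul, abs_mul]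
  exact mul_le_of_le_one_right (by positivity) hratio

lemma sqrt_sum_sq_le_abs_mul {ι : Type*} (S : Finset ι) (u w : ι → ℝ) (r : ℝ)
    (h : ∀ i ∈ S, |u i| ≤ |r| * |w i|) :
    √(∑ i ∈ S, u i ^ 2) ≤ |r| * √(∑ i ∈ S, w i ^ 2) := by
  have hsum : ∑ i ∈ S, u i ^ 2 ≤ r ^ 2 * ∑ i ∈ S, w i ^ 2 := by
    rw [Finset.mul_sum]
    refine Finset.sum_le_sum fun i hi => ?_
    rw [← mul_pow]
    exact sq_le_sq.mpr (by rw [abs_mul]; exact h i hi)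
  calc √(∑ i ∈ S, u i ^ 2) ≤ √(r ^ 2 * ∑ i ∈ S, w i ^ 2) := Real.sqrt_le_sqrt hsum
    _ = |r| * √(∑ i ∈ S, w i ^ 2) := by rw [Real.sqrt_mul (sq_nonneg r), Real.sqrt_sq_eq_abs]

theorem stmt_14_general (n : ℕ) (d x : Fin n → ℝ) (α β lam ε θs θt : ℝ)
    (hα : 0 < α) (hβ : 1 < β) (hlam : 0 < lam)
    (hαβ : ∀ i, α < β * d i)
    (hθs : 0 < θs)
    (heq : β^2 * ∑ i, (d i * x i / ((d i * β - α) * θs + α * β * lam))^2 = 1)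
    (hθt : 0 < θt) (happrox : |θt - θs| ≤ ε) :
    Real.sqrt (∑ i, (d i * β * θt * x i / ((d i * β - α) * θt + α * β * lam) -
        d i * β * θs * x i / ((d i * β - α) * θs + α * β * lam))^2) ≤ ε := by
  have hc : 0 < α * β * lam := by positivity
  have ha : ∀ i, 0 < d i * β - α := fun i => by linarith [hαβ i]
  have hnorm : ∑ i, (d i * β * x i / ((d i * β - α) * θs + α * β * lam)) ^ 2 = 1 := by
    rw [← heq, Finset.mul_sum]
    congr! 1 with i
    ring
  calc _ ≤ |θt - θs| * √(∑ i, (d i * β * x i / ((d i * β - α) * θs + α * β * lam)) ^ 2) := by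
        refine sqrt_sum_sq_le_abs_mul _ _ _ _ fun i _ => ?_
        have := abs_mul_div_add_sub_mul_div_add_le (d i * β * x i) _ _ θs θt hc
          (mul_pos (ha i) hθt).le (by have := ha i; positivity)
        convert this using 4 <;> ring
    _ = |θt - θs| := by rw [hnorm, Real.sqrt_one, mul_one]
    _ ≤ ε := happrox

/-- Approximation error of the weighted proximal operator of MCP/ℓ₂: if
`|θ̃ − θ*| ≤ ε` where `θ*` solves the normalization equation, then the induced
error on the proximal point is at most `ε` in the Euclidean norm. -/
theorem stmt_14 (n : ℕ) (d x : Fin n → ℝ) (hd : ∀ i, 0 < d i) (α β lam ε θs θt : ℝ)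
    (hα : 0 < α) (hβ : 1 < β) (hlam : 0 < lam) (hε : 0 < ε)
    (hαβ : ∀ i, α < β * d i)
    (hθs : 0 < θs)
    (heq : β^2 * ∑ i, (d i * x i / ((d i * β - α) * θs + α * β * lam))^2 = 1)
    (hθt : 0 < θt) (happrox : |θt - θs| ≤ ε) :
    Real.sqrt (∑ i, (d i * β * θt * x i / ((d i * β - α) * θt + α * β * lam) -
        d i * β * θs * x i / ((d i * β - α) * θs + α * β * lam))^2) ≤ ε :=
  stmt_14_general n d x α β lam ε θs θt hα hβ hlam hαβ hθs heq hθt happrox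
end

section
/- Bounds on θ* for the MCP/ℓ₂ penalty: Let D = diag(d₁,…,dₙ) with dᵢ > 0, d_min and d_max its extreme diagonal values, and α, β, λ > 0 with α < βd_min. For x ∈ ℝⁿ with ‖x‖₂ ≤ βλ and ‖Dx‖₂ > αλ, if θ* > 0 satisfies β²Σᵢ [dᵢxᵢ/((dᵢβ − α)θ* + αβλ)]² = 1, then β(‖Dx‖₂ − αλ)/(d_maxβ − α) ≤ θ* ≤ β(‖Dx‖₂ − αλ)/(d_minβ − α). -/
/-- Bounds on `θ*` for the MCP/ℓ₂ penalty: if `‖x‖₂ ≤ βλ`, `‖Dx‖₂ > αλ` and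
`θ* > 0` satisfies `β²Σᵢ [dᵢxᵢ/((dᵢβ − α)θ* + αβλ)]² = 1`, then
`β(‖Dx‖₂ − αλ)/(d_maxβ − α) ≤ θ* ≤ β(‖Dx‖₂ − αλ)/(d_minβ − α)`. -/
theorem stmt_15 (n : ℕ) (d x : Fin n → ℝ) (hd : ∀ i, 0 < d i)
    (α β lam θ dmin dmax : ℝ)
    (hα : 0 < α) (hβ : 1 < β) (hlam : 0 < lam)
    (hmin : ∀ i, dmin ≤ d i) (hmax : ∀ i, d i ≤ dmax) (hdmin : 0 < dmin)
    (hαβ : α < β * dmin)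
    (hx1 : Real.sqrt (∑ i, (x i)^2) ≤ β * lam)
    (hx2 : α * lam < Real.sqrt (∑ i, (d i * x i)^2))
    (hθ : 0 < θ)
    (heq : β^2 * ∑ i, (d i * x i / ((d i * β - α) * θ + α * β * lam))^2 = 1) :
    β * (Real.sqrt (∑ i, (d i * x i)^2) - α * lam) / (dmax * β - α) ≤ θ ∧
    θ ≤ β * (Real.sqrt (∑ i, (d i * x i)^2) - α * lam) / (dmin * β - α) := by
  have hβ0 : (0:ℝ) < β := by linarith
  set T := ∑ i, (d i * x i)^2 with hTdef
  have hTnn : 0 ≤ T := Finset.sum_nonneg fun i _ => sq_nonneg _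
  set S := Real.sqrt T with hSdef
  have hS2 : S^2 = T := Real.sq_sqrt hTnn
  have hSpos : 0 < S := lt_trans (by positivity) hx2
  have hminmax : dmin ≤ dmax := by
    rcases Nat.eq_zero_or_pos n with h0 | h0
    · exfalso
      subst h0
      have hT0 : T = 0 := by simp [hTdef]
      have hS0 : S = 0 := by rw [hSdef, hT0, Real.sqrt_zero]
      nlinarith
    · exact le_trans (hmin ⟨0, h0⟩) (hmax ⟨0, h0⟩)
  set A := (dmin * β - α) * θ + α * β * lam with hA
  set B := (dmax * β - α) * θ + α * β * lam with hB
  have hApos : 0 < A := by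
    have h1 : 0 < (dmin * β - α) * θ := mul_pos (by nlinarith) hθ
    have h2 : 0 < α * β * lam := by positivity
    linarith
  have hAB : A ≤ B := by
    nlinarith [mul_nonneg (mul_nonneg (sub_nonneg.mpr hminmax) hβ0.le) hθ.le]
  have hBpos : 0 < B := lt_of_lt_of_le hApos hAB
  have hdenA : ∀ i, A ≤ (d i * β - α) * θ + α * β * lam := fun i => by
    nlinarith [mul_nonneg (mul_nonneg (sub_nonneg.mpr (hmin i)) hβ0.le) hθ.le]
  have hdenB : ∀ i, (d i * β - α) * θ + α * β * lam ≤ B := fun i => by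
    nlinarith [mul_nonneg (mul_nonneg (sub_nonneg.mpr (hmax i)) hβ0.le) hθ.le]
  have hdenpos : ∀ i, 0 < (d i * β - α) * θ + α * β * lam :=
    fun i => lt_of_lt_of_le hApos (hdenA i)
  have hub : ∑ i, (d i * x i / ((d i * β - α) * θ + α * β * lam))^2 ≤ T / A^2 := by
    rw [hTdef, Finset.sum_div]
    apply Finset.sum_le_sum
    intro i _
    rw [div_pow]
    exact div_le_div_of_nonneg_left (sq_nonneg _) (by positivity)
      (pow_le_pow_left₀ hApos.le (hdenA i) 2)
  have hlb : T / B^2 ≤ ∑ i, (d i * x i / ((d i * β - α) * θ + α * β * lam))^2 := by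
    rw [hTdef, Finset.sum_div]
    apply Finset.sum_le_sum
    intro i _
    rw [div_pow]
    exact div_le_div_of_nonneg_left (sq_nonneg _) (pow_pos (hdenpos i) 2)
      (pow_le_pow_left₀ (hdenpos i).le (hdenB i) 2)
  have hA2 : A^2 ≤ β^2 * T := by
    have h1 : 1 ≤ β^2 * (T / A^2) := by
      rw [← heq]
      exact mul_le_mul_of_nonneg_left hub (by positivity)
    have hA2pos : (0:ℝ) < A^2 := by positivity
    rw [mul_div_assoc', le_div_iff₀ hA2pos, one_mul] at h1
    linarith
  have hB2 : β^2 * T ≤ B^2 := by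
    have h1 : β^2 * (T / B^2) ≤ 1 := by
      rw [← heq]
      exact mul_le_mul_of_nonneg_left hlb (by positivity)
    have hB2pos : (0:ℝ) < B^2 := by positivity
    rw [mul_div_assoc', div_le_iff₀ hB2pos, one_mul] at h1
    linarith
  have hAS : A ≤ β * S := by
    have h : A^2 ≤ (β * S)^2 := by
      calc A^2 ≤ β^2 * T := hA2
        _ = (β * S)^2 := by rw [← hS2]; ring
    calc A = Real.sqrt (A^2) := (Real.sqrt_sq hApos.le).symm
      _ ≤ Real.sqrt ((β * S)^2) := Real.sqrt_le_sqrt h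
      _ = β * S := Real.sqrt_sq (mul_pos hβ0 hSpos).le
  have hBS : β * S ≤ B := by
    have h : (β * S)^2 ≤ B^2 := by
      calc (β * S)^2 = β^2 * T := by rw [← hS2]; ring
        _ ≤ B^2 := hB2
    calc β * S = Real.sqrt ((β * S)^2) := (Real.sqrt_sq (mul_pos hβ0 hSpos).le).symm
      _ ≤ Real.sqrt (B^2) := Real.sqrt_le_sqrt h
      _ = B := Real.sqrt_sq hBpos.le
  have hdmaxpos : (0:ℝ) < dmax * β - α := by
    linarith [mul_le_mul_of_nonneg_right hminmax hβ0.le, mul_comm β dmin]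
  have hdminpos : (0:ℝ) < dmin * β - α := by linarith [mul_comm β dmin]
  constructor
  · rw [div_le_iff₀ hdmaxpos]
    have hexp : β * (S - α * lam) = β * S - α * β * lam := by ring
    linarith [hBS, hB]
  · rw [le_div_iff₀ hdminpos]
    have hexp : β * (S - α * lam) = β * S - α * β * lam := by ring
    linarith [hAS, hA]
end
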